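/- arXiv:2505.17878 — 4 statements merged into one kernel-verified Lean document; each statement's English description precedes it below -/
import Mathlib

section
/- Let f be a non-constant meromorphic function on the unit disk 𝔻 and let k ∈ ℕ. Then, as an identity of meromorphic functions on 𝔻, S_k(f) = Σ_{(n_1,…,n_k) ∈ Λ} [ (−k·k!) / ( Π_{j=1}^k ((−k·j!)^{n_j} · n_j!) ) ] · Π_{j=1}^k ( ((f''/f')^{(j−1)})^{n_j} ), where Λ is the set of all tuples (n_1,…,n_k) with n_r ∈ ℕ_0 for r = 1,…,k satisfying Σ_{r=1}^k r·n_r = k, and (f''/f')^{(j−1)} denotes the (j−1)-st derivative of f''/f'. -/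
open Complex Filter Set Metric Topology

noncomputable section

/-- The open unit disk `𝔻`. -/
def unitDisk : Set ℂ := Metric.ball (0 : ℂ) 1

/-- The logarithmic derivative of `f'`, i.e. `f''/f'`. -/
def ldd (f : ℂ → ℂ) : ℂ → ℂ := fun z => deriv (deriv f) z / deriv f z

/-- `SRec n f m` is the generalized Schwarzian `S_{m+2,n}(f)`. -/
def SRec (n : ℕ) (f : ℂ → ℂ) : ℕ → ℂ → ℂ
  | 0 => ldd f
  | m + 1 => fun z => deriv (SRec n f m) z - (1 / (n : ℂ)) * ldd f z * SRec n f m z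

/-- `SGen n k f` is `S_{k,n}(f)` (for `k ≥ 2`). -/
def SGen (n k : ℕ) (f : ℂ → ℂ) : ℂ → ℂ := SRec n f (k - 2)

/-- The generalized Schwarzian derivative of order `k`: `S_k(f) = S_{k+1,k}(f)`. -/
def Sk (k : ℕ) (f : ℂ → ℂ) : ℂ → ℂ := SGen k (k + 1) f

/-- `f` is a non-constant meromorphic function on `U`: near no point of `U`
is `f` eventually equal to a constant. -/
def NonConstOn (f : ℂ → ℂ) (U : Set ℂ) : Prop :=
  ¬ ∃ c : ℂ, ∃ z ∈ U, ∀ᶠ w in 𝓝[≠] z, f w = c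

/-- `E` has no accumulation point in `U`. -/
def NoAccIn (E U : Set ℂ) : Prop := ∀ z ∈ U, ¬ AccPt z (𝓟 E)

/-- The family `M_{k,M}`: (non-constant) meromorphic functions on `𝔻` whose generalized
Schwarzian derivative `S_k(f)` is holomorphic on `𝔻` with `‖S_k(f)‖_∞ ≤ M`, i.e. it
coincides (away from a set without accumulation points in `𝔻`) with a function `g`
holomorphic on `𝔻` and bounded by `M`. -/
def MFam (k : ℕ) (M : ℝ) : Set (ℂ → ℂ) :=
  {f | MeromorphicOn f unitDisk ∧ NonConstOn f unitDisk ∧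
    ∃ g : ℂ → ℂ, AnalyticOnNhd ℂ g unitDisk ∧ (∀ z ∈ unitDisk, ‖g z‖ ≤ M) ∧
      NoAccIn {w ∈ unitDisk | Sk k f w ≠ g w} unitDisk}

/-- The family `H_{k,M} = M_{k,M} ∩ H(𝔻)`. -/
def HFam (k : ℕ) (M : ℝ) : Set (ℂ → ℂ) :=
  {f ∈ MFam k M | AnalyticOnNhd ℂ f unitDisk}

/-- The chordal (spherical) distance on the Riemann sphere `ℂ ∪ {∞}`. -/
def sphDist (x y : OnePoint ℂ) : ℝ :=
  Option.elim x (Option.elim y 0 fun w => 1 / Real.sqrt (1 + ‖w‖ ^ 2))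
    fun z =>
      Option.elim y (1 / Real.sqrt (1 + ‖z‖ ^ 2)) fun w =>
        ‖z - w‖ / (Real.sqrt (1 + ‖z‖ ^ 2) * Real.sqrt (1 + ‖w‖ ^ 2))

/-- Locally uniform convergence on `U` with respect to the spherical metric. -/
def TendstoLocUnifSph (F : ℕ → ℂ → ℂ) (g : ℂ → OnePoint ℂ) (U : Set ℂ) : Prop :=
  ∀ ε > (0 : ℝ), ∀ x ∈ U, ∃ t ∈ 𝓝[U] x,
    ∀ᶠ n in atTop, ∀ y ∈ t, sphDist (F n y : OnePoint ℂ) (g y) < ε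

/-- A family of (meromorphic) functions is normal on `U` if every sequence has a
subsequence converging locally uniformly on `U` w.r.t. the spherical metric. -/
def NormalOn (𝓕 : Set (ℂ → ℂ)) (U : Set ℂ) : Prop :=
  ∀ F : ℕ → ℂ → ℂ, (∀ n, F n ∈ 𝓕) →
    ∃ φ : ℕ → ℕ, StrictMono φ ∧
      ∃ g : ℂ → OnePoint ℂ, TendstoLocUnifSph (fun n => F (φ n)) g U

/-- A family is quasi-normal on `U` if every sequence has a subsequence converging
locally uniformly (spherically) off some exceptional set `E ⊆ U` without
accumulation points in `U`. -/
def QuasiNormalOn (𝓕 : Set (ℂ → ℂ)) (U : Set ℂ) : Prop :=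
  ∀ F : ℕ → ℂ → ℂ, (∀ n, F n ∈ 𝓕) →
    ∃ φ : ℕ → ℕ, StrictMono φ ∧ ∃ E : Set ℂ, E ⊆ U ∧ NoAccIn E U ∧
      ∃ g : ℂ → OnePoint ℂ, TendstoLocUnifSph (fun n => F (φ n)) g (U \ E)

/-- A family is locally uniformly bounded on `U`. -/
def LocUnifBddOn (𝓕 : Set (ℂ → ℂ)) (U : Set ℂ) : Prop :=
  ∀ x ∈ U, ∃ t ∈ 𝓝[U] x, ∃ C : ℝ, ∀ f ∈ 𝓕, ∀ y ∈ t, ‖f y‖ ≤ C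

/-- The index set `Λ` of all tuples `(n_1, …, n_k)` of nonnegative integers with
`∑ r · n_r = k` (indexed by `Fin k`, where `i : Fin k` corresponds to `r = i + 1`). -/
def Lambda (k : ℕ) : Finset (Fin k → ℕ) :=
  (Fintype.piFinset fun _ : Fin k => Finset.range (k + 1)).filter
    fun n => ∑ i : Fin k, (i.1 + 1) * n i = k

section SkAux

open Finset

variable {k : ℕ}

private def Aa (k : ℕ) (i : Fin k) : ℂ := -(k : ℂ) * (Nat.factorial (i.1 + 1) : ℂ)

private def Dd (k : ℕ) (n : Fin k → ℕ) : ℂ :=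
  ∏ i : Fin k, (Aa k i ^ n i * (Nat.factorial (n i) : ℂ))

private def Cc (k q : ℕ) (n : Fin k → ℕ) : ℂ :=
  (-(k : ℂ) * (Nat.factorial q : ℂ)) / Dd k n

private def Lam (k q : ℕ) : Finset (Fin k → ℕ) :=
  (Fintype.piFinset fun _ : Fin k => Finset.range (q + 1)).filter
    fun n => ∑ i : Fin k, (i.1 + 1) * n i = q

private def Mn (u : ℂ → ℂ) (n : Fin k → ℕ) (z : ℂ) : ℂ :=
  ∏ i : Fin k, (iteratedDeriv i.1 u z) ^ n i

private lemma kC_ne (hk : 1 ≤ k) : (k : ℂ) ≠ 0 := by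
  have : k ≠ 0 := by omega
  exact_mod_cast this

private lemma Aa_ne (hk : 1 ≤ k) (i : Fin k) : Aa k i ≠ 0 :=
  mul_ne_zero (neg_ne_zero.mpr (kC_ne hk))
    (Nat.cast_ne_zero.mpr (Nat.factorial_ne_zero _))

private lemma Dd_ne (hk : 1 ≤ k) (n : Fin k → ℕ) : Dd k n ≠ 0 :=
  Finset.prod_ne_zero_iff.mpr fun i _ =>
    mul_ne_zero (pow_ne_zero _ (Aa_ne hk i))
      (Nat.cast_ne_zero.mpr (Nat.factorial_ne_zero _))

private lemma mem_Lam {q : ℕ} {n : Fin k → ℕ} :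
    n ∈ Lam k q ↔ ∑ i : Fin k, (i.1 + 1) * n i = q := by
  constructor
  · exact fun h => (Finset.mem_filter.mp h).2
  · intro h
    refine Finset.mem_filter.mpr ⟨Fintype.mem_piFinset.mpr fun i => Finset.mem_range.mpr ?_, h⟩
    have h1 : (i.1 + 1) * n i ≤ q := h ▸ Finset.single_le_sum
      (f := fun j : Fin k => (j.1 + 1) * n j) (fun _ _ => Nat.zero_le _) (Finset.mem_univ i)
    have h2 : n i ≤ (i.1 + 1) * n i := Nat.le_mul_of_pos_left _ (Nat.succ_pos _)
    omega

private lemma Dd_update (n : Fin k → ℕ) (i : Fin k) (v : ℕ) :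
    Dd k (Function.update n i v) * (Aa k i ^ n i * (Nat.factorial (n i) : ℂ))
      = Dd k n * (Aa k i ^ v * (Nat.factorial v : ℂ)) := by
  have h1 : Dd k (Function.update n i v)
      = (Aa k i ^ v * (Nat.factorial v : ℂ)) *
        ∏ x ∈ Finset.univ.erase i, (Aa k x ^ n x * (Nat.factorial (n x) : ℂ)) := by
    rw [Dd, ← Finset.mul_prod_erase _ _ (Finset.mem_univ i), Function.update_self]
    congr 1
    exact Finset.prod_congr rfl fun x hx => by
      rw [Function.update_of_ne (Finset.ne_of_mem_erase hx)]
  have h2 : Dd k n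
      = (Aa k i ^ n i * (Nat.factorial (n i) : ℂ)) *
        ∏ x ∈ Finset.univ.erase i, (Aa k x ^ n x * (Nat.factorial (n x) : ℂ)) :=
    (Finset.mul_prod_erase _ _ (Finset.mem_univ i)).symm
  rw [h1, h2]; ring

private lemma Dd_update_succ (hk : 1 ≤ k) (n : Fin k → ℕ) (i : Fin k) :
    Dd k (Function.update n i (n i + 1)) = Aa k i * ((n i : ℂ) + 1) * Dd k n := by
  have hne : Aa k i ^ n i * (Nat.factorial (n i) : ℂ) ≠ 0 :=
    mul_ne_zero (pow_ne_zero _ (Aa_ne hk i)) (Nat.cast_ne_zero.mpr (Nat.factorial_ne_zero _))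
  apply mul_right_cancel₀ hne
  rw [Dd_update]
  rw [Nat.factorial_succ, pow_succ]
  push_cast
  ring

private lemma wt_update (n : Fin k → ℕ) (i : Fin k) (v : ℕ) :
    (∑ j : Fin k, (j.1 + 1) * Function.update n i v j) + (i.1 + 1) * n i
      = (∑ j : Fin k, (j.1 + 1) * n j) + (i.1 + 1) * v := by
  have h1 : ∑ j : Fin k, (j.1 + 1) * Function.update n i v j
      = (i.1 + 1) * v + ∑ x ∈ Finset.univ.erase i, (x.1 + 1) * n x := by
    rw [← Finset.add_sum_erase _ _ (Finset.mem_univ i), Function.update_self]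
    congr 1
    exact Finset.sum_congr rfl fun x hx => by
      rw [Function.update_of_ne (Finset.ne_of_mem_erase hx)]
  have h2 : ∑ j : Fin k, (j.1 + 1) * n j
      = (i.1 + 1) * n i + ∑ x ∈ Finset.univ.erase i, (x.1 + 1) * n x :=
    (Finset.add_sum_erase _ _ (Finset.mem_univ i)).symm
  omega


open Finset

variable {k : ℕ}

private lemma analyticAt_deriv' {f : ℂ → ℂ} {z : ℂ} (h : AnalyticAt ℂ f z) :
    AnalyticAt ℂ (deriv f) z := by
  obtain ⟨s, hs, h2⟩ := h.eventually_analyticAt.exists_mem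
  exact AnalyticOnNhd.deriv (fun y hy => h2 y hy) z (mem_of_mem_nhds hs)

private lemma analyticAt_iteratedDeriv' {f : ℂ → ℂ} {z : ℂ} (h : AnalyticAt ℂ f z) (m : ℕ) :
    AnalyticAt ℂ (iteratedDeriv m f) z := by
  induction m with
  | zero => rwa [iteratedDeriv_zero]
  | succ m ih => rw [iteratedDeriv_succ]; exact analyticAt_deriv' ih

private lemma analyticAt_ldd {f : ℂ → ℂ} {z : ℂ} (h : AnalyticAt ℂ f z)
    (h0 : deriv f z ≠ 0) : AnalyticAt ℂ (ldd f) z := by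
  have h1 : AnalyticAt ℂ (deriv f) z := analyticAt_deriv' h
  have h2 : AnalyticAt ℂ (deriv (deriv f)) z := analyticAt_deriv' h1
  exact h2.div h1 h0

-- base case computations
private lemma Lam_one (hk : 1 ≤ k) :
    Lam k 1 = {Pi.single (⟨0, hk⟩ : Fin k) 1} := by
  ext n
  rw [mem_Lam, Finset.mem_singleton]
  constructor
  · intro h
    have hz : ∀ i : Fin k, i ≠ ⟨0, hk⟩ → n i = 0 := by
      intro i hi
      have h1 : (i.1 + 1) * n i ≤ 1 := h ▸ Finset.single_le_sum
        (f := fun j : Fin k => (j.1 + 1) * n j) (fun _ _ => Nat.zero_le _) (Finset.mem_univ i)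
      have h2 : 1 ≤ i.1 := by
        rcases Nat.eq_zero_or_pos i.1 with h' | h'
        · exact absurd (Fin.ext h') hi
        · exact h'
      nlinarith [Nat.zero_le (n i)]
    have h0 : (0 + 1) * n ⟨0, hk⟩ = 1 := by
      rwa [Finset.sum_eq_single_of_mem (⟨0, hk⟩ : Fin k) (Finset.mem_univ _)
        (fun b _ hb => by rw [hz b hb, Nat.mul_zero])] at h
    funext i
    by_cases hi : i = ⟨0, hk⟩
    · subst hi; simp [Pi.single]; omega
    · rw [hz i hi, Pi.single_eq_of_ne hi]
  · rintro rfl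
    rw [Finset.sum_eq_single_of_mem (⟨0, hk⟩ : Fin k) (Finset.mem_univ _)
      (fun b _ hb => by rw [Pi.single_eq_of_ne hb, Nat.mul_zero])]
    simp

private lemma Cc_one (hk : 1 ≤ k) : Cc k 1 (Pi.single (⟨0, hk⟩ : Fin k) 1) = 1 := by
  have hD : Dd k (Pi.single (⟨0, hk⟩ : Fin k) 1) = -(k : ℂ) := by
    rw [Dd, Finset.prod_eq_single_of_mem (⟨0, hk⟩ : Fin k) (Finset.mem_univ _)
      (fun b _ hb => by rw [Pi.single_eq_of_ne hb]; simp)]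
    simp [Aa, Pi.single_eq_same]
  rw [Cc, hD]
  rw [Nat.factorial_one]
  rw [Nat.cast_one, mul_one]
  exact div_self (neg_ne_zero.mpr (kC_ne hk))


private lemma Mn_one (hk : 1 ≤ k) (u : ℂ → ℂ) (z : ℂ) :
    Mn u (Pi.single (⟨0, hk⟩ : Fin k) 1) z = u z := by
  rw [Mn, Finset.prod_eq_single_of_mem (⟨0, hk⟩ : Fin k) (Finset.mem_univ _)
    (fun b _ hb => by rw [Pi.single_eq_of_ne hb, pow_zero])]
  simp

private lemma wt_two_update (n : Fin k → ℕ) (a b : Fin k) (va vb : ℕ) (hab : a ≠ b) :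
    (∑ j : Fin k, (j.1 + 1) * (Function.update (Function.update n a va) b vb) j)
        + (a.1 + 1) * n a + (b.1 + 1) * n b
      = (∑ j : Fin k, (j.1 + 1) * n j) + (a.1 + 1) * va + (b.1 + 1) * vb := by
  have h1 := wt_update n a va
  have h2 := wt_update (Function.update n a va) b vb
  rw [Function.update_of_ne (Ne.symm hab)] at h2
  linarith

private lemma Mn_update_succ (u : ℂ → ℂ) (z : ℂ) (n : Fin k → ℕ) (i : Fin k) :
    Mn u (Function.update n i (n i + 1)) z = iteratedDeriv i.1 u z * Mn u n z := by
  have h1 : Mn u (Function.update n i (n i + 1)) z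
      = (iteratedDeriv i.1 u z) ^ (n i + 1) *
        ∏ x ∈ Finset.univ.erase i, (iteratedDeriv x.1 u z) ^ n x := by
    rw [Mn, ← Finset.mul_prod_erase _ _ (Finset.mem_univ i), Function.update_self]
    congr 1
    exact Finset.prod_congr rfl fun x hx => by
      rw [Function.update_of_ne (Finset.ne_of_mem_erase hx)]
  have h2 : Mn u n z
      = (iteratedDeriv i.1 u z) ^ n i *
        ∏ x ∈ Finset.univ.erase i, (iteratedDeriv x.1 u z) ^ n x :=
    (Finset.mul_prod_erase _ _ (Finset.mem_univ i)).symm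
  rw [h1, h2, pow_succ]; ring

private lemma Mn_shift (u : ℂ → ℂ) (z : ℂ) (n : Fin k → ℕ) (i i' : Fin k)
    (hii : i ≠ i') (hni : 1 ≤ n i) :
    Mn u (Function.update (Function.update n i (n i - 1)) i' (n i' + 1)) z
      = (∏ j ∈ Finset.univ.erase i, (iteratedDeriv j.1 u z) ^ n j) *
          ((iteratedDeriv i.1 u z) ^ (n i - 1) * iteratedDeriv i'.1 u z) := by
  set w : Fin k → ℂ := fun j => iteratedDeriv j.1 u z with hw
  set m := Function.update n i (n i - 1) with hm
  have hmi : m i = n i - 1 := Function.update_self _ _ _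
  have hmem : i ∈ Finset.univ.erase i' := Finset.mem_erase.mpr ⟨hii, Finset.mem_univ i⟩
  have hexp : ∀ x ∈ (Finset.univ.erase i').erase i,
      Function.update m i' (n i' + 1) x = n x := by
    intro x hx
    have hx1 : x ≠ i := (Finset.mem_erase.mp hx).1
    have hx2 : x ≠ i' := (Finset.mem_erase.mp (Finset.mem_erase.mp hx).2).1
    rw [Function.update_of_ne hx2, hm, Function.update_of_ne hx1]
  have hLHS : Mn u (Function.update m i' (n i' + 1)) z
      = w i' ^ (n i' + 1) * (w i ^ (n i - 1) *
          ∏ x ∈ (Finset.univ.erase i').erase i, w x ^ n x) := by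
    rw [Mn, ← Finset.mul_prod_erase _ _ (Finset.mem_univ i'), Function.update_self,
      ← Finset.mul_prod_erase _ _ hmem, Function.update_of_ne hii, hmi,
      Finset.prod_congr rfl (fun x hx => by rw [hexp x hx])]
  have hRHS : ∏ j ∈ Finset.univ.erase i, w j ^ n j
      = w i' ^ n i' * ∏ x ∈ (Finset.univ.erase i').erase i, w x ^ n x := by
    have hmem' : i' ∈ Finset.univ.erase i :=
      Finset.mem_erase.mpr ⟨Ne.symm hii, Finset.mem_univ i'⟩
    rw [← Finset.mul_prod_erase _ _ hmem', Finset.erase_right_comm]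
  rw [hLHS, hRHS, pow_succ]; ring

private lemma coefA (hk : 1 ≤ k) (q : ℕ) (n : Fin k → ℕ) :
    -(1 / (k : ℂ)) * Cc k q n
      = (((n ⟨0, hk⟩ : ℂ) + 1)) / ((q : ℂ) + 1) *
          Cc k (q + 1) (Function.update n ⟨0, hk⟩ (n ⟨0, hk⟩ + 1)) := by
  have hA0 : Aa k (⟨0, hk⟩ : Fin k) = -(k : ℂ) := by
    rw [Aa]; norm_num
  rw [Cc, Cc, Dd_update_succ hk n ⟨0, hk⟩, hA0, Nat.factorial_succ]
  have h1 := Dd_ne hk n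
  have h2 := kC_ne hk
  have h3 : ((q : ℂ) + 1) ≠ 0 := Nat.cast_add_one_ne_zero q
  have h4 : ((n ⟨0, hk⟩ : ℂ) + 1) ≠ 0 := Nat.cast_add_one_ne_zero _
  field_simp
  push_cast
  ring

private lemma coefB (hk : 1 ≤ k) (q : ℕ) (n : Fin k → ℕ) (i i' : Fin k)
    (hii : i ≠ i') (hni : 1 ≤ n i) (hval : i'.1 = i.1 + 1) :
    Cc k q n * (n i : ℂ)
      = (((i'.1 + 1) * (n i' + 1) : ℕ) : ℂ) / ((q : ℂ) + 1) *
          Cc k (q + 1) (Function.update (Function.update n i (n i - 1)) i' (n i' + 1)) := by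
  set m := Function.update n i (n i - 1) with hm
  have hmi : m i = n i - 1 := Function.update_self _ _ _
  have hmi' : m i' = n i' := Function.update_of_ne (Ne.symm hii) _ _
  have hn_eq : Function.update m i (m i + 1) = n := by
    funext a
    rcases eq_or_ne a i with rfl | ha
    · rw [Function.update_self, hmi]; omega
    · rw [Function.update_of_ne ha, hm, Function.update_of_ne ha]
  have hDn : Dd k n = Aa k i * ((m i : ℂ) + 1) * Dd k m := by
    rw [← hn_eq]; exact Dd_update_succ hk m i
  have hDn' : Dd k (Function.update m i' (n i' + 1)) = Aa k i' * ((n i' : ℂ) + 1) * Dd k m := by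
    have := Dd_update_succ hk m i'
    rwa [hmi'] at this
  have hA : Aa k i' = ((i.1 : ℂ) + 2) * Aa k i := by
    rw [Aa, Aa, hval]
    rw [show i.1 + 1 + 1 = (i.1 + 1) + 1 from rfl, Nat.factorial_succ]
    push_cast
    ring
  have hmc : (m i : ℂ) + 1 = (n i : ℂ) := by
    rw [hmi]
    have : n i - 1 + 1 = n i := by omega
    exact_mod_cast congrArg (Nat.cast : ℕ → ℂ) this
  rw [Cc, Cc, hDn', hDn, hA, hmc, hval, Nat.factorial_succ]
  have h1 := Dd_ne hk m
  have h2 : Aa k i ≠ 0 := Aa_ne hk i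
  have h3 : ((q : ℂ) + 1) ≠ 0 := Nat.cast_add_one_ne_zero q
  have h4 : ((n i' : ℂ) + 1) ≠ 0 := Nat.cast_add_one_ne_zero _
  have h5 : (n i : ℂ) ≠ 0 := Nat.cast_ne_zero.mpr (by omega)
  have h6 : ((i.1 : ℂ) + 2) ≠ 0 := by
    have hc : ((i.1 : ℂ) + 2) = ((i.1 + 2 : ℕ) : ℂ) := by push_cast; ring
    rw [hc]; exact Nat.cast_ne_zero.mpr (by omega)
  push_cast
  rw [div_mul_eq_mul_div, div_mul_div_comm]
  rw [div_eq_div_iff (by exact mul_ne_zero (mul_ne_zero h2 h5) h1)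
    (mul_ne_zero h3 (mul_ne_zero (mul_ne_zero (mul_ne_zero h6 h2) h4) h1))]
  ring
private lemma partA (hk : 1 ≤ k) (q : ℕ) (u : ℂ → ℂ) (z : ℂ) :
    ∑ n ∈ Lam k q, -(1 / (k : ℂ)) * u z * (Cc k q n * Mn u n z)
      = ∑ n' ∈ Lam k (q + 1),
          ((((⟨0, hk⟩ : Fin k).1 + 1) * n' ⟨0, hk⟩ : ℕ) : ℂ) / ((q : ℂ) + 1) *
            (Cc k (q + 1) n' * Mn u n' z) := by
  set j0 : Fin k := ⟨0, hk⟩ with hj0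
  have h0 : ∀ x ∈ Lam k (q + 1),
      (((j0.1 + 1) * x j0 : ℕ) : ℂ) / ((q : ℂ) + 1) * (Cc k (q + 1) x * Mn u x z) ≠ 0
        → x j0 ≠ 0 := by
    intro x _ hne h0'
    apply hne
    rw [h0']
    simp
  refine (Finset.sum_nbij' (i := fun n => Function.update n j0 (n j0 + 1))
    (j := fun n' => Function.update n' j0 (n' j0 - 1)) ?_ ?_ ?_ ?_ ?_).trans
      (Finset.sum_filter_of_ne h0)
  · intro a ha
    refine Finset.mem_filter.mpr ⟨mem_Lam.mpr ?_, by simp⟩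
    have h := wt_update a j0 (a j0 + 1)
    have hw := mem_Lam.mp ha
    have hv : j0.1 = 0 := rfl
    rw [hv] at h
    simp only [Nat.zero_add, one_mul] at h
    linarith
  · intro a ha
    obtain ⟨ha1, ha2⟩ := Finset.mem_filter.mp ha
    refine mem_Lam.mpr ?_
    have h := wt_update a j0 (a j0 - 1)
    have hw := mem_Lam.mp ha1
    have hv : j0.1 = 0 := rfl
    rw [hv] at h
    simp only [Nat.zero_add, one_mul] at h
    have h2 : a j0 - 1 + 1 = a j0 := by omega
    linarith
  · intro a _
    beta_reduce
    have h1 : Function.update a j0 (a j0 + 1) j0 = a j0 + 1 := Function.update_self _ _ _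
    rw [h1, Function.update_idem, Nat.add_sub_cancel, Function.update_eq_self]
  · intro a ha
    beta_reduce
    have ha2 : a j0 ≠ 0 := (Finset.mem_filter.mp ha).2
    have h1 : Function.update a j0 (a j0 - 1) j0 = a j0 - 1 := Function.update_self _ _ _
    rw [h1, Function.update_idem]
    have h2 : a j0 - 1 + 1 = a j0 := by omega
    rw [h2, Function.update_eq_self]
  · intro a ha
    beta_reduce
    have h1 : Function.update a j0 (a j0 + 1) j0 = a j0 + 1 := Function.update_self _ _ _
    rw [h1, Mn_update_succ u z a j0]
    have hv : j0.1 = 0 := rfl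
    rw [hv, iteratedDeriv_zero]
    have hc := coefA hk q a
    rw [← hj0] at hc
    calc -(1 / (k : ℂ)) * u z * (Cc k q a * Mn u a z)
        = (-(1 / (k : ℂ)) * Cc k q a) * (u z * Mn u a z) := by ring
      _ = (((a j0 : ℂ) + 1) / ((q : ℂ) + 1) *
            Cc k (q + 1) (Function.update a j0 (a j0 + 1))) * (u z * Mn u a z) := by
          rw [hc]
      _ = (((0 + 1) * (a j0 + 1) : ℕ) : ℂ) / ((q : ℂ) + 1) *
            (Cc k (q + 1) (Function.update a j0 (a j0 + 1)) * (u z * Mn u a z)) := by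
          push_cast
          ring
private lemma shift_unshift (n : Fin k → ℕ) (a b : Fin k) (hab : a ≠ b) (hna : 1 ≤ n a) :
    Function.update (Function.update (Function.update (Function.update n a (n a - 1)) b (n b + 1)) b
        (Function.update (Function.update n a (n a - 1)) b (n b + 1) b - 1)) a
        (Function.update (Function.update n a (n a - 1)) b (n b + 1) a + 1) = n := by
  have h1 : Function.update (Function.update n a (n a - 1)) b (n b + 1) b = n b + 1 :=
    Function.update_self _ _ _
  have h2 : Function.update (Function.update n a (n a - 1)) b (n b + 1) a = n a - 1 := by
    rw [Function.update_of_ne hab, Function.update_self]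
  rw [h1, h2, Function.update_idem, Nat.add_sub_cancel]
  have h3 : n a - 1 + 1 = n a := by omega
  rw [h3]
  funext x
  rcases eq_or_ne x a with rfl | hxa
  · rw [Function.update_self]
  · rw [Function.update_of_ne hxa]
    rcases eq_or_ne x b with rfl | hxb
    · rw [Function.update_self]
    · rw [Function.update_of_ne hxb, Function.update_of_ne hxa]

private lemma unshift_shift (n : Fin k → ℕ) (a b : Fin k) (hab : a ≠ b) (hnb : 1 ≤ n b) :
    Function.update (Function.update (Function.update (Function.update n b (n b - 1)) a (n a + 1)) a
        (Function.update (Function.update n b (n b - 1)) a (n a + 1) a - 1)) b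
        (Function.update (Function.update n b (n b - 1)) a (n a + 1) b + 1) = n := by
  have h1 : Function.update (Function.update n b (n b - 1)) a (n a + 1) a = n a + 1 :=
    Function.update_self _ _ _
  have h2 : Function.update (Function.update n b (n b - 1)) a (n a + 1) b = n b - 1 := by
    rw [Function.update_of_ne (Ne.symm hab), Function.update_self]
  rw [h1, h2, Function.update_idem, Nat.add_sub_cancel]
  have h3 : n b - 1 + 1 = n b := by omega
  rw [h3]
  funext x
  rcases eq_or_ne x b with rfl | hxb
  · rw [Function.update_self]
  · rw [Function.update_of_ne hxb]
    rcases eq_or_ne x a with rfl | hxa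
    · rw [Function.update_self]
    · rw [Function.update_of_ne hxa, Function.update_of_ne hxb]
private lemma partB (hk : 1 ≤ k) (q : ℕ) (hq : q + 1 ≤ k) (u : ℂ → ℂ) (z : ℂ) :
    ∑ n ∈ Lam k q, ∑ i : Fin k,
        Cc k q n * ((∏ j ∈ Finset.univ.erase i, (iteratedDeriv j.1 u z) ^ n j) *
          ((n i : ℂ) * (iteratedDeriv i.1 u z) ^ (n i - 1) * iteratedDeriv (i.1 + 1) u z))
      = ∑ n' ∈ Lam k (q + 1), ∑ j ∈ Finset.univ.erase (⟨0, hk⟩ : Fin k),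
          (((j.1 + 1) * n' j : ℕ) : ℂ) / ((q : ℂ) + 1) * (Cc k (q + 1) n' * Mn u n' z) := by
  rw [← Finset.sum_product', ← Finset.sum_product']
  refine ((Finset.sum_filter_of_ne
      (p := fun p : (Fin k → ℕ) × Fin k => p.1 p.2 ≠ 0) ?_).symm).trans
    (Eq.trans ?_ (Finset.sum_filter_of_ne
      (p := fun p : (Fin k → ℕ) × Fin k => p.1 p.2 ≠ 0) ?_))
  · intro p _ hne h0
    apply hne
    rw [h0]
    simp
  case refine_3 =>
    intro p _ hne h0
    apply hne
    rw [h0]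
    simp
  have hlt : ∀ p ∈ (Lam k q ×ˢ (Finset.univ : Finset (Fin k))).filter
      (fun p : (Fin k → ℕ) × Fin k => p.1 p.2 ≠ 0), p.2.1 + 1 < k := by
    intro p hp
    obtain ⟨hp1, hp2⟩ := Finset.mem_filter.mp hp
    have h1 : p.1 ∈ Lam k q := (Finset.mem_product.mp hp1).1
    have hw := mem_Lam.mp h1
    have hb : (p.2.1 + 1) * p.1 p.2 ≤ q := hw ▸ Finset.single_le_sum
      (f := fun j : Fin k => (j.1 + 1) * p.1 j) (fun _ _ => Nat.zero_le _) (Finset.mem_univ p.2)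
    have h2 : p.2.1 + 1 ≤ (p.2.1 + 1) * p.1 p.2 := Nat.le_mul_of_pos_right _ (by omega)
    omega
  refine Finset.sum_bij'
    (i := fun p hp => (Function.update (Function.update p.1 p.2 (p.1 p.2 - 1))
        (⟨p.2.1 + 1, hlt p hp⟩ : Fin k) (p.1 ⟨p.2.1 + 1, hlt p hp⟩ + 1),
        (⟨p.2.1 + 1, hlt p hp⟩ : Fin k)))
    (j := fun p _ => (Function.update (Function.update p.1 p.2 (p.1 p.2 - 1))
        (⟨p.2.1 - 1, Nat.lt_of_le_of_lt (Nat.sub_le _ _) p.2.isLt⟩ : Fin k)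
        (p.1 ⟨p.2.1 - 1, Nat.lt_of_le_of_lt (Nat.sub_le _ _) p.2.isLt⟩ + 1),
        (⟨p.2.1 - 1, Nat.lt_of_le_of_lt (Nat.sub_le _ _) p.2.isLt⟩ : Fin k)))
    ?_ ?_ ?_ ?_ ?_
  -- forward membership
  · intro p hp
    beta_reduce
    obtain ⟨hp1, hp2⟩ := Finset.mem_filter.mp hp
    have hpL : p.1 ∈ Lam k q := (Finset.mem_product.mp hp1).1
    have hw := mem_Lam.mp hpL
    refine Finset.mem_filter.mpr ⟨Finset.mem_product.mpr ⟨?_, ?_⟩, ?_⟩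
    · refine mem_Lam.mpr ?_
      have hij : p.2 ≠ (⟨p.2.1 + 1, hlt p hp⟩ : Fin k) :=
        Fin.ne_of_val_ne (show p.2.1 ≠ p.2.1 + 1 by omega)
      have h := wt_two_update p.1 p.2 (⟨p.2.1 + 1, hlt p hp⟩ : Fin k)
        (p.1 p.2 - 1) (p.1 (⟨p.2.1 + 1, hlt p hp⟩ : Fin k) + 1) hij
      have e1 : (p.2.1 + 1) * (p.1 p.2) = (p.2.1 + 1) * (p.1 p.2 - 1) + (p.2.1 + 1) := by
        rw [← Nat.mul_succ]
        congr 1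
        omega
      have e2 : ((⟨p.2.1 + 1, hlt p hp⟩ : Fin k).1 + 1) * (p.1 (⟨p.2.1 + 1, hlt p hp⟩ : Fin k) + 1)
          = ((⟨p.2.1 + 1, hlt p hp⟩ : Fin k).1 + 1) * (p.1 (⟨p.2.1 + 1, hlt p hp⟩ : Fin k))
            + ((⟨p.2.1 + 1, hlt p hp⟩ : Fin k).1 + 1) := by
        rw [Nat.mul_succ]
      have e3 : (⟨p.2.1 + 1, hlt p hp⟩ : Fin k).1 = p.2.1 + 1 := rfl
      linarith
    · exact Finset.mem_erase.mpr ⟨Fin.ne_of_val_ne (by simp), Finset.mem_univ _⟩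
    · dsimp only
      rw [Function.update_self]
      omega
  -- backward membership
  · intro p hp
    beta_reduce
    obtain ⟨hp1, hp2⟩ := Finset.mem_filter.mp hp
    have hpL : p.1 ∈ Lam k (q + 1) := (Finset.mem_product.mp hp1).1
    have hpe : p.2 ∈ Finset.univ.erase (⟨0, hk⟩ : Fin k) := (Finset.mem_product.mp hp1).2
    have hne0 : p.2.1 ≠ 0 := fun h => (Finset.mem_erase.mp hpe).1 (Fin.eq_of_val_eq h)
    have hw := mem_Lam.mp hpL
    set c : Fin k := ⟨p.2.1 - 1, Nat.lt_of_le_of_lt (Nat.sub_le _ _) p.2.isLt⟩ with hc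
    refine Finset.mem_filter.mpr ⟨Finset.mem_product.mpr ⟨?_, Finset.mem_univ _⟩, ?_⟩
    · refine mem_Lam.mpr ?_
      have hij : p.2 ≠ c :=
        Fin.ne_of_val_ne (show p.2.1 ≠ p.2.1 - 1 by omega)
      have h := wt_two_update p.1 p.2 c (p.1 p.2 - 1) (p.1 c + 1) hij
      have e1 : (p.2.1 + 1) * (p.1 p.2) = (p.2.1 + 1) * (p.1 p.2 - 1) + (p.2.1 + 1) := by
        rw [← Nat.mul_succ]
        congr 1
        omega
      have e2 : (c.1 + 1) * (p.1 c + 1) = (c.1 + 1) * (p.1 c) + (c.1 + 1) := by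
        rw [Nat.mul_succ]
      have e3 : c.1 + 1 = p.2.1 := show p.2.1 - 1 + 1 = p.2.1 by omega
      linarith
    · dsimp only
      rw [Function.update_self]
      omega
  -- left inverse
  · intro p hp
    beta_reduce
    obtain ⟨hp1, hp2⟩ := Finset.mem_filter.mp hp
    have hni : 1 ≤ p.1 p.2 := by omega
    have hij : p.2 ≠ (⟨p.2.1 + 1, hlt p hp⟩ : Fin k) :=
      Fin.ne_of_val_ne (show p.2.1 ≠ p.2.1 + 1 by omega)
    have key : ∀ d : Fin k, d = p.2 →
        Function.update (Function.update
            (Function.update (Function.update p.1 p.2 (p.1 p.2 - 1))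
              (⟨p.2.1 + 1, hlt p hp⟩ : Fin k) (p.1 (⟨p.2.1 + 1, hlt p hp⟩ : Fin k) + 1))
            (⟨p.2.1 + 1, hlt p hp⟩ : Fin k)
            (Function.update (Function.update p.1 p.2 (p.1 p.2 - 1))
              (⟨p.2.1 + 1, hlt p hp⟩ : Fin k) (p.1 (⟨p.2.1 + 1, hlt p hp⟩ : Fin k) + 1)
              (⟨p.2.1 + 1, hlt p hp⟩ : Fin k) - 1)) d
          (Function.update (Function.update p.1 p.2 (p.1 p.2 - 1))
              (⟨p.2.1 + 1, hlt p hp⟩ : Fin k) (p.1 (⟨p.2.1 + 1, hlt p hp⟩ : Fin k) + 1) d + 1)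
        = p.1 := by
      rintro d rfl
      exact shift_unshift p.1 p.2 (⟨p.2.1 + 1, hlt p hp⟩ : Fin k) hij hni
    refine Prod.ext ?_ ?_
    · exact key _ (Fin.eq_of_val_eq (show p.2.1 + 1 - 1 = p.2.1 by omega))
    · exact Fin.eq_of_val_eq (show p.2.1 + 1 - 1 = p.2.1 by omega)
  -- right inverse
  · intro p hp
    beta_reduce
    obtain ⟨hp1, hp2⟩ := Finset.mem_filter.mp hp
    have hpe : p.2 ∈ Finset.univ.erase (⟨0, hk⟩ : Fin k) := (Finset.mem_product.mp hp1).2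
    have hne0 : p.2.1 ≠ 0 := fun h => (Finset.mem_erase.mp hpe).1 (Fin.eq_of_val_eq h)
    have hnb : 1 ≤ p.1 p.2 := by omega
    set c : Fin k := ⟨p.2.1 - 1, Nat.lt_of_le_of_lt (Nat.sub_le _ _) p.2.isLt⟩ with hc
    have hcb : c ≠ p.2 :=
      Fin.ne_of_val_ne (show p.2.1 - 1 ≠ p.2.1 by omega)
    have key : ∀ d : Fin k, d = p.2 →
        Function.update (Function.update
            (Function.update (Function.update p.1 p.2 (p.1 p.2 - 1)) c (p.1 c + 1)) c
            (Function.update (Function.update p.1 p.2 (p.1 p.2 - 1)) c (p.1 c + 1) c - 1)) d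
          (Function.update (Function.update p.1 p.2 (p.1 p.2 - 1)) c (p.1 c + 1) d + 1)
        = p.1 := by
      rintro d rfl
      exact unshift_shift p.1 c p.2 hcb hnb
    refine Prod.ext ?_ ?_
    · exact key _ (Fin.eq_of_val_eq (show p.2.1 - 1 + 1 = p.2.1 by omega))
    · exact Fin.eq_of_val_eq (show p.2.1 - 1 + 1 = p.2.1 by omega)
  -- term equality
  · intro p hp
    obtain ⟨hp1, hp2⟩ := Finset.mem_filter.mp hp
    have hni : 1 ≤ p.1 p.2 := by omega
    have hij : p.2 ≠ (⟨p.2.1 + 1, hlt p hp⟩ : Fin k) :=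
      Fin.ne_of_val_ne (show p.2.1 ≠ p.2.1 + 1 by omega)
    have hval : (⟨p.2.1 + 1, hlt p hp⟩ : Fin k).1 = p.2.1 + 1 := rfl
    have hcoef := coefB hk q p.1 p.2 (⟨p.2.1 + 1, hlt p hp⟩ : Fin k) hij hni hval
    beta_reduce
    dsimp only
    rw [Function.update_self]
    rw [Mn_shift u z p.1 p.2 (⟨p.2.1 + 1, hlt p hp⟩ : Fin k) hij hni]
    linear_combination ((∏ j ∈ Finset.univ.erase p.2, (iteratedDeriv j.1 u z) ^ p.1 j) *
      ((iteratedDeriv p.2.1 u z) ^ (p.1 p.2 - 1) * iteratedDeriv (p.2.1 + 1) u z)) * hcoef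
private lemma rhs_split (q : ℕ) {n : Fin k → ℕ} (hn : n ∈ Lam k (q + 1)) (X : ℂ) :
    X = ∑ j : Fin k, (((j.1 + 1) * n j : ℕ) : ℂ) / ((q : ℂ) + 1) * X := by
  have hsum : ∑ j : Fin k, (((j.1 + 1) * n j : ℕ) : ℂ) = (q : ℂ) + 1 := by
    rw [← Nat.cast_sum]
    exact_mod_cast congrArg (Nat.cast : ℕ → ℂ) (mem_Lam.mp hn)
  calc X = (∑ j : Fin k, (((j.1 + 1) * n j : ℕ) : ℂ)) / ((q : ℂ) + 1) * X := by
        rw [hsum, div_self (Nat.cast_add_one_ne_zero q), one_mul]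
    _ = _ := by rw [Finset.sum_div, Finset.sum_mul]

private lemma SRec_formula (hk : 1 ≤ k) (f : ℂ → ℂ) :
    ∀ m, m + 1 ≤ k → ∀ z : ℂ, AnalyticAt ℂ (ldd f) z →
      SRec k f m z = ∑ n ∈ Lam k (m + 1), Cc k (m + 1) n * Mn (ldd f) n z := by
  intro m
  induction m with
  | zero =>
    intro _ z _
    rw [Lam_one hk, Finset.sum_singleton, Cc_one hk, Mn_one hk, one_mul]
    rfl
  | succ m ih =>
    intro hm z hu
    have hm1 : m + 1 ≤ k := by omega
    have hstep : SRec k f (m + 1) z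
        = deriv (SRec k f m) z - (1 / (k : ℂ)) * ldd f z * SRec k f m z := rfl
    have hEq : SRec k f m =ᶠ[nhds z]
        (fun w => ∑ n ∈ Lam k (m + 1), Cc k (m + 1) n * Mn (ldd f) n w) := by
      filter_upwards [hu.eventually_analyticAt] with w hw
      exact ih hm1 w hw
    have hterm : ∀ n ∈ Lam k (m + 1),
        HasDerivAt (fun w => Cc k (m + 1) n * Mn (ldd f) n w)
          (Cc k (m + 1) n * ∑ i : Fin k,
            (∏ j ∈ Finset.univ.erase i, (iteratedDeriv j.1 (ldd f) z) ^ n j) *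
              ((n i : ℂ) * (iteratedDeriv i.1 (ldd f) z) ^ (n i - 1) *
                iteratedDeriv (i.1 + 1) (ldd f) z)) z := by
      intro n _
      have h1 : ∀ i : Fin k, HasDerivAt (fun w => (iteratedDeriv i.1 (ldd f) w) ^ n i)
          ((n i : ℂ) * (iteratedDeriv i.1 (ldd f) z) ^ (n i - 1) *
            iteratedDeriv (i.1 + 1) (ldd f) z) z := by
        intro i
        have hdi : HasDerivAt (iteratedDeriv i.1 (ldd f))
            (iteratedDeriv (i.1 + 1) (ldd f) z) z := by
          have h := (analyticAt_iteratedDeriv' hu i.1).differentiableAt.hasDerivAt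
          rw [iteratedDeriv_succ]
          exact h
        exact hdi.pow (n i)
      have h2 := HasDerivAt.fun_finsetProd (u := (Finset.univ : Finset (Fin k)))
        (f := fun (i : Fin k) (w : ℂ) => (iteratedDeriv i.1 (ldd f) w) ^ n i)
        (f' := fun i => (n i : ℂ) * (iteratedDeriv i.1 (ldd f) z) ^ (n i - 1) *
          iteratedDeriv (i.1 + 1) (ldd f) z) (fun i _ => h1 i)
      simp only [smul_eq_mul] at h2
      exact HasDerivAt.const_mul (Cc k (m + 1) n) h2
    have hG : HasDerivAt (fun w => ∑ n ∈ Lam k (m + 1), Cc k (m + 1) n * Mn (ldd f) n w)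
        (∑ n ∈ Lam k (m + 1), Cc k (m + 1) n * ∑ i : Fin k,
          (∏ j ∈ Finset.univ.erase i, (iteratedDeriv j.1 (ldd f) z) ^ n j) *
            ((n i : ℂ) * (iteratedDeriv i.1 (ldd f) z) ^ (n i - 1) *
              iteratedDeriv (i.1 + 1) (ldd f) z)) z := HasDerivAt.fun_sum hterm
    rw [hstep, hEq.deriv_eq, hG.deriv, ih hm1 z hu]
    have hB := partB hk (m + 1) (by omega) (ldd f) z
    have hA := partA hk (m + 1) (ldd f) z
    have hRHS : ∑ n' ∈ Lam k (m + 1 + 1), Cc k (m + 1 + 1) n' * Mn (ldd f) n' z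
        = (∑ n' ∈ Lam k (m + 1 + 1), ∑ j ∈ Finset.univ.erase (⟨0, hk⟩ : Fin k),
            (((j.1 + 1) * n' j : ℕ) : ℂ) / (((m + 1 : ℕ) : ℂ) + 1) *
              (Cc k (m + 1 + 1) n' * Mn (ldd f) n' z))
          + ∑ n' ∈ Lam k (m + 1 + 1),
              ((((⟨0, hk⟩ : Fin k).1 + 1) * n' ⟨0, hk⟩ : ℕ) : ℂ) / (((m + 1 : ℕ) : ℂ) + 1) *
                (Cc k (m + 1 + 1) n' * Mn (ldd f) n' z) := by
      rw [← Finset.sum_add_distrib]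
      refine Finset.sum_congr rfl fun n' hn' => ?_
      rw [Finset.sum_erase_add Finset.univ
        (fun j : Fin k => (((j.1 + 1) * n' j : ℕ) : ℂ) / (((m + 1 : ℕ) : ℂ) + 1) *
          (Cc k (m + 1 + 1) n' * Mn (ldd f) n' z))
        (Finset.mem_univ (⟨0, hk⟩ : Fin k))]
      exact rhs_split (m + 1) hn' _
    rw [hRHS, ← hA, ← hB]
    rw [sub_eq_add_neg]
    congr 1
    · exact Finset.sum_congr rfl fun n _ => Finset.mul_sum _ _ _
    · rw [Finset.mul_sum, ← Finset.sum_neg_distrib]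
      exact Finset.sum_congr rfl fun n _ => by ring
end SkAux

/-- The formula for `S_k(f)` as a differential polynomial in `f''/f'`: for every
non-constant meromorphic `f` on `𝔻`, as an identity of meromorphic functions
(i.e. at every point where `f` is analytic with `f' ≠ 0`),
`S_k(f) = ∑_{(n_1,…,n_k) ∈ Λ} (-k·k!) / (∏_j (-k·j!)^{n_j} · n_j!) · ∏_j ((f''/f')^{(j-1)})^{n_j}`. -/
theorem Sk_eq_differentialPolynomial (k : ℕ) (hk : 1 ≤ k) (f : ℂ → ℂ)
    (hf : MeromorphicOn f unitDisk) (hnc : NonConstOn f unitDisk) :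
    ∀ z ∈ unitDisk, AnalyticAt ℂ f z → deriv f z ≠ 0 →
      Sk k f z = ∑ n ∈ Lambda k,
        ((-(k : ℂ) * (Nat.factorial k : ℂ)) /
            ∏ i : Fin k, ((-(k : ℂ) * (Nat.factorial (i.1 + 1) : ℂ)) ^ n i *
              (Nat.factorial (n i) : ℂ))) *
          ∏ i : Fin k, (iteratedDeriv i.1 (ldd f) z) ^ n i := by
  intro z _ hA hD
  have hu : AnalyticAt ℂ (ldd f) z := analyticAt_ldd hA hD
  obtain ⟨m, rfl⟩ : ∃ m, k = m + 1 := ⟨k - 1, by omega⟩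
  have h := SRec_formula (k := m + 1) hk f m (by omega) z hu
  have hSk : Sk (m + 1) f z = SRec (m + 1) f m z := rfl
  rw [hSk, h]
  rfl
end
end

section
/- There exists a meromorphic function f on ℂ such that S_2(f)(z) ≠ 0 and S_2(f)(z) ≠ ∞ for all z ∈ ℂ (i.e., the classical Schwarzian derivative S_2(f) is an entire function with no zeros), and such that f is not of the form f(z) = (a·e^{αz} + b)/(c·e^{αz} + d) for any choice of a, b, c, d, α ∈ ℂ. In fact one may take f = f_1/f_2, where f_1(z) = J_0(e^{z/2}) and f_2(z) = Y_0(e^{z/2}) are built from the Bessel functions J_0 and Y_0 of order zero, in which case S_2(f)(z) = e^z/2. -/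
open Complex Filter Set Metric Topology

noncomputable section

def A : ℕ → ℂ := fun k => (-1)^k / (4^k * (k.factorial)^2)

def B : ℕ → ℂ
  | 0 => 0
  | k+1 => (-2*((k:ℂ)+1) * A (k+1) - B k / 4) / (((k:ℂ)+1)^2)

lemma hA0 : A 0 = 1 := by simp [A]

lemma hArec (k : ℕ) : ((k:ℂ)+1)^2 * A (k+1) = -(A k)/4 := by
  have h1 : ((k.factorial : ℂ)) ≠ 0 := Nat.cast_ne_zero.2 (Nat.factorial_ne_zero k)
  have h2 : ((k:ℂ)+1) ≠ 0 := Nat.cast_add_one_ne_zero k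
  simp only [A, Nat.factorial_succ, pow_succ]
  push_cast
  field_simp

lemma hBrec (k : ℕ) : ((k:ℂ)+1)^2 * B (k+1) = -(B k)/4 - 2*((k:ℂ)+1)*A (k+1) := by
  have h2 : (((k:ℂ)+1)^2) ≠ 0 := by
    exact pow_ne_zero _ (Nat.cast_add_one_ne_zero k)
  rw [show B (k+1) = (-2*((k:ℂ)+1) * A (k+1) - B k / 4) / (((k:ℂ)+1)^2) from rfl]
  field_simp
  ring

lemma normA (k : ℕ) : ‖A k‖ ≤ 1 / k.factorial := by
  have h4 : (1:ℝ) ≤ 4 ^ k := one_le_pow₀ (by norm_num)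
  have hf : (1:ℝ) ≤ (k.factorial : ℝ) := by
    exact_mod_cast Nat.one_le_iff_ne_zero.2 (Nat.factorial_ne_zero k)
  have hfpos : (0:ℝ) < (k.factorial : ℝ) := by positivity
  have : ‖A k‖ = 1 / (4^k * (k.factorial:ℝ)^2) := by
    simp [A, norm_div, norm_pow]
  rw [this, div_le_div_iff₀ (by positivity) hfpos]
  nlinarith

lemma normB (k : ℕ) : ‖B k‖ ≤ 3 / k.factorial := by
  induction k with
  | zero => simp [B]
  | succ k ih =>
    have hfpos : (0:ℝ) < (k.factorial : ℝ) := by exact_mod_cast Nat.factorial_pos k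
    have hk1 : (0:ℝ) < (k:ℝ)+1 := by positivity
    have hB1 : ‖B (k+1)‖ = ‖-2*((k:ℂ)+1) * A (k+1) - B k / 4‖ / ((k:ℝ)+1)^2 := by
      rw [show B (k+1) = (-2*((k:ℂ)+1) * A (k+1) - B k / 4) / (((k:ℂ)+1)^2) from rfl]
      rw [norm_div, norm_pow]
      congr 2
      simpa using Complex.norm_natCast (k+1)
    have hAn : ‖A (k+1)‖ ≤ 1 / (k+1).factorial := normA (k+1)
    have hnum : ‖-2*((k:ℂ)+1) * A (k+1) - B k / 4‖
        ≤ 2*((k:ℝ)+1) * (1/((k+1).factorial:ℝ)) + (3 / k.factorial)/4 := by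
      refine le_trans (norm_sub_le _ _) ?_
      gcongr
      · rw [norm_mul, norm_mul]
        have h1 : ‖(-2:ℂ)‖ = 2 := by norm_num
        have h2 : ‖((k:ℂ)+1)‖ = (k:ℝ)+1 := by simpa using Complex.norm_natCast (k+1)
        rw [h1, h2]
        gcongr
      · rw [norm_div]
        simp only [Complex.norm_ofNat]
        gcongr
    have hfs : ((k+1).factorial : ℝ) = ((k:ℝ)+1) * k.factorial := by
      rw [Nat.factorial_succ]; push_cast; ring
    rw [hB1]
    rw [div_le_iff₀ (by positivity)]
    rw [hfs] at hnum ⊢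
    have h3 : 3 / (((k:ℝ)+1) * ↑k.factorial) * ((k:ℝ)+1)^2
        = 3*((k:ℝ)+1) / k.factorial := by
      field_simp
    rw [h3]
    have hne1 : ((k:ℝ)+1) ≠ 0 := ne_of_gt hk1
    have hne2 : ((k.factorial:ℝ)) ≠ 0 := ne_of_gt hfpos
    refine le_trans hnum ?_
    rw [show (2:ℝ) * ((k:ℝ)+1) * (1 / (((k:ℝ)+1) * (k.factorial:ℝ))) + 3 / (k.factorial:ℝ) / 4
        = (11/4) / (k.factorial:ℝ) from by field_simp; ring]
    rw [show (3:ℝ) * ((k:ℝ)+1) / (k.factorial:ℝ) = (3*((k:ℝ)+1)) / (k.factorial:ℝ) from by ring]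
    gcongr
    nlinarith

def bnd : ℕ → ℝ := fun k => 3*((k:ℝ)+1)^2 / k.factorial

lemma bnd_nonneg (k : ℕ) : 0 ≤ bnd k := by
  have : (0:ℝ) < k.factorial := by exact_mod_cast Nat.factorial_pos k
  simp only [bnd]
  positivity

lemma summable_bnd (x : ℝ) (hx : 0 ≤ x) : Summable (fun k => bnd k * x ^ k) := by
  refine Summable.of_nonneg_of_le
    (fun k => mul_nonneg (bnd_nonneg k) (pow_nonneg hx k)) (fun k => ?_)
    (((Real.summable_pow_div_factorial (4*x)).mul_left 3))
  have hfp : (0:ℝ) < k.factorial := by exact_mod_cast Nat.factorial_pos k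
  have h2 : ((k:ℝ)+1) ≤ 2^k := by
    exact_mod_cast Nat.lt_two_pow_self (n := k)
  have h3 : ((k:ℝ)+1)^2 ≤ 4^k := by
    calc ((k:ℝ)+1)^2 ≤ (2^k)^2 := by gcongr
    _ = 4^k := by rw [← pow_mul, pow_mul']; norm_num
  calc bnd k * x^k = 3*((k:ℝ)+1)^2 * x^k / k.factorial := by rw [bnd]; ring
  _ ≤ 3*(4^k) * x^k / k.factorial := by gcongr
  _ = 3 * ((4*x)^k / k.factorial) := by rw [mul_pow]; ring

lemma summable_norm_ser (c : ℕ → ℂ) (h : ∀ k, ‖c k‖ ≤ bnd k) (z : ℂ) :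
    Summable (fun k => ‖c k * Complex.exp ((k:ℂ)*z)‖) := by
  refine Summable.of_nonneg_of_le (fun k => norm_nonneg _) (fun k => ?_)
    (summable_bnd (Real.exp z.re) (Real.exp_nonneg _))
  rw [norm_mul]
  have he : ‖Complex.exp ((k:ℂ)*z)‖ = Real.exp z.re ^ k := by
    rw [Complex.norm_exp, ← Real.exp_nat_mul]
    congr 1
    simp
  rw [he]
  exact mul_le_mul_of_nonneg_right (h k) (by positivity)

lemma summable_ser (c : ℕ → ℂ) (h : ∀ k, ‖c k‖ ≤ bnd k) (z : ℂ) :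
    Summable (fun k => c k * Complex.exp ((k:ℂ)*z)) :=
  (summable_norm_ser c h z).of_norm

lemma hasDerivAt_ser (c : ℕ → ℂ) (h : ∀ k, ‖c k‖ ≤ bnd k)
    (h' : ∀ k : ℕ, ‖(k:ℂ) * c k‖ ≤ bnd k) (z : ℂ) :
    HasDerivAt (fun w => ∑' k, c k * Complex.exp ((k:ℂ)*w))
      (∑' k : ℕ, (k:ℂ) * c k * Complex.exp ((k:ℂ)*z)) z := by
  set R : ℝ := ‖z‖ + 1 with hR
  refine hasDerivAt_tsum_of_isPreconnected
    (𝕜 := ℂ) (F := ℂ)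
    (g := fun (k : ℕ) (w : ℂ) => c k * Complex.exp ((k:ℂ)*w))
    (g' := fun (k : ℕ) (w : ℂ) => (k:ℂ) * c k * Complex.exp ((k:ℂ)*w))
    (u := fun k => bnd k * (Real.exp R)^k) (y₀ := (0:ℂ))
    (summable_bnd (Real.exp R) (Real.exp_nonneg _))
    (Metric.isOpen_ball (x := (0:ℂ)) (ε := R))
    ((convex_ball (0:ℂ) R).isPreconnected)
    (fun k y _ => ?_) (fun k y hy => ?_) ?_ ?_ ?_
  · have h1 : HasDerivAt (fun w : ℂ => (k:ℂ)*w) ((k:ℂ)) y := by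
      simpa using (hasDerivAt_id y).const_mul (k:ℂ)
    have h2 := (h1.cexp).const_mul (c k)
    refine h2.congr_deriv ?_
    ring
  · rw [norm_mul, norm_mul]
    have he : ‖Complex.exp ((k:ℂ)*y)‖ ≤ Real.exp R ^ k := by
      rw [Complex.norm_exp, ← Real.exp_nat_mul]
      apply Real.exp_le_exp.2
      have h3 : ((k:ℂ)*y).re = (k:ℝ) * y.re := by simp
      rw [h3]
      have : y.re ≤ R := by
        calc y.re ≤ |y.re| := le_abs_self _
        _ ≤ ‖y‖ := Complex.abs_re_le_norm y
        _ ≤ R := le_of_lt (mem_ball_zero_iff.1 hy)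
      exact mul_le_mul_of_nonneg_left this (by positivity)
    calc ‖(k:ℂ)‖ * ‖c k‖ * ‖Complex.exp ((k:ℂ)*y)‖
        = ‖(k:ℂ) * c k‖ * ‖Complex.exp ((k:ℂ)*y)‖ := by rw [norm_mul]
      _ ≤ bnd k * Real.exp R ^ k := by
          exact mul_le_mul (h' k) he (norm_nonneg _) (bnd_nonneg k)
  · exact Metric.mem_ball_self (by positivity)
  · exact summable_ser c h 0
  · exact mem_ball_zero_iff.2 (by rw [hR]; linarith)

lemma bnd_fam {c : ℕ → ℂ} (h : ∀ k, ‖c k‖ ≤ 3 / k.factorial) :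
    (∀ k : ℕ, ‖c k‖ ≤ bnd k) ∧ (∀ k : ℕ, ‖(k:ℂ)*c k‖ ≤ bnd k) ∧
      (∀ k : ℕ, ‖(k:ℂ)*((k:ℂ)*c k)‖ ≤ bnd k) := by
  have key : ∀ (m : ℝ) (k : ℕ), 0 ≤ m → m ≤ ((k:ℝ)+1)^2 → ‖c k‖ * m ≤ bnd k := by
    intro m k hm hmle
    have hfp : (0:ℝ) < k.factorial := by exact_mod_cast Nat.factorial_pos k
    calc ‖c k‖ * m ≤ (3 / k.factorial) * ((k:ℝ)+1)^2 :=
          mul_le_mul (h k) hmle hm (by positivity)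
      _ = bnd k := by rw [bnd]; ring
  have hnk : ∀ k : ℕ, ‖((k:ℂ))‖ = (k:ℝ) := fun k => by
    simpa using Complex.norm_natCast k
  refine ⟨fun k => ?_, fun k => ?_, fun k => ?_⟩
  · have := key 1 k (by norm_num) (by nlinarith [Nat.cast_nonneg (α := ℝ) k])
    simpa using this
  · rw [norm_mul, hnk, mul_comm]
    exact key _ k (Nat.cast_nonneg k) (by nlinarith [Nat.cast_nonneg (α := ℝ) k])
  · have hkk : (k:ℝ) * (k:ℝ) ≤ ((k:ℝ)+1)^2 := by nlinarith [Nat.cast_nonneg (α := ℝ) k]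
    calc ‖(k:ℂ)*((k:ℂ)*c k)‖ = ‖c k‖ * ((k:ℝ)*(k:ℝ)) := by
          rw [norm_mul, norm_mul, hnk]; ring
    _ ≤ bnd k := key _ k (by positivity) hkk

lemma nA : ∀ k, ‖A k‖ ≤ 3 / k.factorial := fun k =>
  (normA k).trans (by
    have : (0:ℝ) < k.factorial := by exact_mod_cast Nat.factorial_pos k
    gcongr; norm_num)

def u0 : ℂ → ℂ := fun z => ∑' k : ℕ, A k * Complex.exp ((k:ℂ)*z)
def u1 : ℂ → ℂ := fun z => ∑' k : ℕ, (k:ℂ) * A k * Complex.exp ((k:ℂ)*z)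
def u2 : ℂ → ℂ := fun z => ∑' k : ℕ, (k:ℂ) * ((k:ℂ) * A k) * Complex.exp ((k:ℂ)*z)
def w0 : ℂ → ℂ := fun z => ∑' k : ℕ, B k * Complex.exp ((k:ℂ)*z)
def w1 : ℂ → ℂ := fun z => ∑' k : ℕ, (k:ℂ) * B k * Complex.exp ((k:ℂ)*z)
def w2 : ℂ → ℂ := fun z => ∑' k : ℕ, (k:ℂ) * ((k:ℂ) * B k) * Complex.exp ((k:ℂ)*z)

lemma hu0 (z : ℂ) : HasDerivAt u0 (u1 z) z :=
  hasDerivAt_ser A (bnd_fam nA).1 (bnd_fam nA).2.1 z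

lemma hu1 (z : ℂ) : HasDerivAt u1 (u2 z) z :=
  hasDerivAt_ser (fun k => (k:ℂ) * A k) (bnd_fam nA).2.1 (bnd_fam nA).2.2 z

lemma hw0 (z : ℂ) : HasDerivAt w0 (w1 z) z :=
  hasDerivAt_ser B (bnd_fam normB).1 (bnd_fam normB).2.1 z

lemma hw1 (z : ℂ) : HasDerivAt w1 (w2 z) z :=
  hasDerivAt_ser (fun k => (k:ℂ) * B k) (bnd_fam normB).2.1 (bnd_fam normB).2.2 z

lemma du0 : deriv u0 = u1 := funext fun z => (hu0 z).deriv
lemma du1 : deriv u1 = u2 := funext fun z => (hu1 z).deriv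
lemma dw0 : deriv w0 = w1 := funext fun z => (hw0 z).deriv
lemma dw1 : deriv w1 = w2 := funext fun z => (hw1 z).deriv

lemma ODEu (z : ℂ) : u2 z = -(Complex.exp z / 4) * u0 z := by
  rw [u2, u0, ← tsum_mul_left]
  rw [Summable.tsum_eq_zero_add ((summable_ser _ (bnd_fam nA).2.2 z))]
  simp only [Nat.cast_zero, zero_mul, mul_zero, zero_add]
  refine tsum_congr fun k => ?_
  push_cast
  rw [show ((k:ℂ)+1) * z = (k:ℂ)*z + z by ring, Complex.exp_add]
  linear_combination (Complex.exp ((k:ℂ)*z) * Complex.exp z) * hArec k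

lemma ODEw (z : ℂ) : w2 z = -(Complex.exp z / 4) * w0 z - 2 * u1 z := by
  have h1 : -(Complex.exp z / 4) * w0 z
      = ∑' k : ℕ, -(B k)/4 * Complex.exp (((k:ℂ)+1)*z) := by
    rw [w0, ← tsum_mul_left]
    refine tsum_congr fun k => ?_
    rw [show ((k:ℂ)+1) * z = (k:ℂ)*z + z by ring, Complex.exp_add]
    ring
  have h2 : 2 * u1 z = ∑' k : ℕ, 2*((k:ℂ)+1)*A (k+1) * Complex.exp (((k:ℂ)+1)*z) := by
    rw [u1, ← tsum_mul_left]
    rw [Summable.tsum_eq_zero_add ((summable_ser _ (bnd_fam nA).2.1 z).mul_left 2)]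
    simp only [Nat.cast_zero, zero_mul, mul_zero, zero_add]
    refine tsum_congr fun k => ?_
    push_cast
    ring
  have hs1 : Summable (fun k : ℕ => -(B k)/4 * Complex.exp (((k:ℂ)+1)*z)) := by
    have := ((summable_ser B (bnd_fam normB).1 z).mul_left (-(Complex.exp z)/4))
    refine this.congr fun k => ?_
    rw [show ((k:ℂ)+1) * z = (k:ℂ)*z + z by ring, Complex.exp_add]
    ring
  have hs2 : Summable (fun k : ℕ => 2*((k:ℂ)+1)*A (k+1) * Complex.exp (((k:ℂ)+1)*z)) := by
    have hsh := ((summable_ser _ (bnd_fam nA).2.1 z).mul_left 2).comp_injective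
      (add_left_injective 1)
    refine hsh.congr fun k => ?_
    simp only [Function.comp]
    push_cast
    ring
  rw [h1, h2, ← Summable.tsum_sub hs1 hs2]
  rw [w2, Summable.tsum_eq_zero_add ((summable_ser _ (bnd_fam normB).2.2 z))]
  simp only [Nat.cast_zero, zero_mul, mul_zero, zero_add]
  refine tsum_congr fun k => ?_
  push_cast
  rw [show ((k:ℂ)+1) * z = (k:ℂ)*z + z by ring, Complex.exp_add]
  linear_combination (Complex.exp ((k:ℂ)*z) * Complex.exp z) * hBrec k

def v : ℂ → ℂ := fun z => z * u0 z + w0 z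
def v1 : ℂ → ℂ := fun z => u0 z + z * u1 z + w1 z
def v2 : ℂ → ℂ := fun z => 2 * u1 z + z * u2 z + w2 z

lemma hv (z : ℂ) : HasDerivAt v (v1 z) z := by
  have h := ((hasDerivAt_id z).mul (hu0 z)).add (hw0 z)
  refine h.congr_deriv ?_
  rw [v1]; simp only [id_eq]; ring

lemma hv1 (z : ℂ) : HasDerivAt v1 (v2 z) z := by
  have h := ((hu0 z).add ((hasDerivAt_id z).mul (hu1 z))).add (hw1 z)
  refine h.congr_deriv ?_
  rw [v2]; simp only [id_eq]; ring

lemma dv : deriv v = v1 := funext fun z => (hv z).deriv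
lemma dv1 : deriv v1 = v2 := funext fun z => (hv1 z).deriv

lemma ODEv (z : ℂ) : v2 z = -(Complex.exp z / 4) * v z := by
  rw [v2, v, ODEu, ODEw]; ring

def Wf : ℂ → ℂ := fun z => u0 z * v1 z - u1 z * v z

lemma hWf (z : ℂ) : HasDerivAt Wf 0 z := by
  have h := ((hu0 z).mul (hv1 z)).sub ((hu1 z).mul (hv z))
  refine h.congr_deriv ?_
  rw [ODEu, ODEv]; ring

lemma Wf_const (x y : ℂ) : Wf x = Wf y :=
  is_const_of_deriv_eq_zero (fun z => (hWf z).differentiableAt) (fun z => (hWf z).deriv) x y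

lemma tendsto_ser (c : ℕ → ℂ) (h : ∀ k, ‖c k‖ ≤ bnd k) :
    Tendsto (fun n : ℕ => ∑' k : ℕ, c k * Complex.exp ((k:ℂ)*((-(n:ℝ) : ℝ):ℂ)))
      atTop (𝓝 (c 0)) := by
  have hbs : Summable (fun k => bnd k) := by
    have := summable_bnd 1 (by norm_num)
    simpa using this
  have hbs' : Summable (fun k => bnd (k+1)) := by
    rwa [summable_nat_add_iff 1]
  set S : ℝ := ∑' k : ℕ, bnd (k+1) with hS
  have key : ∀ n : ℕ, ‖(∑' k : ℕ, c k * Complex.exp ((k:ℂ)*((-(n:ℝ) : ℝ):ℂ))) - c 0‖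
      ≤ Real.exp (-(n:ℝ)) * S := by
    intro n
    set t : ℂ := ((-(n:ℝ) : ℝ):ℂ) with ht
    have htre : t.re = -(n:ℝ) := by simp [ht]
    have hsum := summable_ser c h t
    rw [Summable.tsum_eq_zero_add hsum]
    simp only [Nat.cast_zero, zero_mul, Complex.exp_zero, mul_one]
    rw [add_comm, add_sub_cancel_right]
    have hnorm : Summable (fun k : ℕ => ‖c (k+1) * Complex.exp (((k:ℕ)+1:ℕ) * t)‖) := by
      have := (summable_norm_ser c h t).comp_injective (add_left_injective 1)
      exact this.congr fun k => rfl
    refine le_trans (norm_tsum_le_tsum_norm hnorm) ?_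
    have hterm : ∀ k : ℕ, ‖c (k+1) * Complex.exp ((((k+1):ℕ):ℂ) * t)‖
        ≤ bnd (k+1) * Real.exp (-(n:ℝ)) := by
      intro k
      rw [norm_mul]
      have he : ‖Complex.exp ((((k+1):ℕ):ℂ) * t)‖ = Real.exp ((((k+1):ℕ):ℝ) * t.re) := by
        rw [Complex.norm_exp]
        congr 1
        simp
      rw [he, htre]
      have hexp : Real.exp ((((k+1):ℕ):ℝ) * -(n:ℝ)) ≤ Real.exp (-(n:ℝ)) := by
        apply Real.exp_le_exp.2
        have h1 : (1:ℝ) ≤ (((k+1):ℕ):ℝ) := by exact_mod_cast Nat.one_le_iff_ne_zero.2 (Nat.succ_ne_zero k)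
        nlinarith [Nat.cast_nonneg (α := ℝ) n]
      exact mul_le_mul (h (k+1)) hexp (Real.exp_nonneg _) (bnd_nonneg _)
    calc (∑' k : ℕ, ‖c (k+1) * Complex.exp ((((k+1):ℕ):ℂ) * t)‖)
        ≤ ∑' k : ℕ, bnd (k+1) * Real.exp (-(n:ℝ)) :=
          Summable.tsum_le_tsum hterm hnorm (hbs'.mul_right _)
      _ = Real.exp (-(n:ℝ)) * S := by rw [tsum_mul_right, hS, mul_comm]
  rw [← tendsto_sub_nhds_zero_iff]
  refine squeeze_zero_norm key ?_
  have h1 : Tendsto (fun n : ℕ => -(n:ℝ)) atTop atBot :=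
    tendsto_neg_atBot_iff.2 tendsto_natCast_atTop_atTop
  have h2 : Tendsto (fun n : ℕ => Real.exp (-(n:ℝ))) atTop (𝓝 0) :=
    Real.tendsto_exp_atBot.comp h1
  have := h2.mul_const S
  simpa using this

lemma Wf_eq_one (z : ℂ) : Wf z = 1 := by
  have expand : ∀ x : ℂ, Wf x = u0 x * u0 x + u0 x * w1 x - u1 x * w0 x := by
    intro x
    rw [Wf, v1, v]; ring
  have hu0t := tendsto_ser A (bnd_fam nA).1
  have hu1t := tendsto_ser (fun k => (k:ℂ) * A k) (bnd_fam nA).2.1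
  have hw0t := tendsto_ser B (bnd_fam normB).1
  have hw1t := tendsto_ser (fun k => (k:ℂ) * B k) (bnd_fam normB).2.1
  rw [hA0] at hu0t
  simp only [Nat.cast_zero, zero_mul] at hu1t hw1t
  rw [show B 0 = 0 from rfl] at hw0t
  have hL : Tendsto (fun n : ℕ => Wf (((-(n:ℝ) : ℝ):ℂ))) atTop (𝓝 1) := by
    have : Tendsto (fun n : ℕ =>
        u0 (((-(n:ℝ) : ℝ):ℂ)) * u0 (((-(n:ℝ) : ℝ):ℂ))
        + u0 (((-(n:ℝ) : ℝ):ℂ)) * w1 (((-(n:ℝ) : ℝ):ℂ))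
        - u1 (((-(n:ℝ) : ℝ):ℂ)) * w0 (((-(n:ℝ) : ℝ):ℂ))) atTop
        (𝓝 (1*1 + 1*0 - 0*0)) := by
      exact ((hu0t.mul hu0t).add (hu0t.mul hw1t)).sub (hu1t.mul hw0t)
    simp only [mul_one, mul_zero, zero_mul, add_zero, sub_zero, one_mul] at this
    exact this.congr fun n => (expand _).symm
  have hconst : Tendsto (fun n : ℕ => Wf (((-(n:ℝ) : ℝ):ℂ))) atTop (𝓝 (Wf z)) := by
    have : (fun n : ℕ => Wf (((-(n:ℝ) : ℝ):ℂ))) = fun _ => Wf z :=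
      funext fun n => Wf_const _ z
    rw [this]
    exact tendsto_const_nhds
  exact tendsto_nhds_unique hconst hL

lemma sk2_div (p q Wq L : ℂ → ℂ)
    (hp : Differentiable ℂ p) (hq : Differentiable ℂ q)
    (hp' : Differentiable ℂ (deriv p)) (hq' : Differentiable ℂ (deriv q))
    (hWdef : ∀ x, Wq x = p x * deriv q x - deriv p x * q x)
    (hLdef : ∀ x, L x = deriv Wq x / Wq x - 2 * deriv q x / q x)
    (U : Set ℂ) (hU : IsOpen U) (z₀ : ℂ) (hz : z₀ ∈ U)
    (hq0 : ∀ w ∈ U, q w ≠ 0) (hW0 : ∀ w ∈ U, Wq w ≠ 0) :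
    Sk 2 (fun w => p w / q w) z₀ = deriv L z₀ - 1/2 * L z₀ * L z₀ := by
  set h : ℂ → ℂ := fun w => p w / q w with hh
  have hWq_diff : Differentiable ℂ Wq := by
    rw [funext hWdef]
    exact (hp.mul hq').sub (hp'.mul hq)
  have step1 : ∀ w ∈ U, HasDerivAt h (-(Wq w) / q w^2) w := by
    intro w hw
    have hd := ((hp w).hasDerivAt.div ((hq w).hasDerivAt) (hq0 w hw))
    refine hd.congr_deriv ?_
    rw [hWdef]
    ring
  have hd1 : ∀ w ∈ U, deriv h w = -(Wq w) / q w ^ 2 := fun w hw => (step1 w hw).deriv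
  have step2 : ∀ w ∈ U, HasDerivAt (deriv h)
      ((-(deriv Wq w) * q w^2 - (-(Wq w)) * (2 * q w ^ 1 * deriv q w)) / (q w^2)^2) w := by
    intro w hw
    have hq2 : HasDerivAt (fun x => q x ^ 2) (2 * q w ^ 1 * deriv q w) w :=
      ((hq w).hasDerivAt).pow 2
    have base : HasDerivAt (fun x => -(Wq x) / q x ^ 2)
        ((-(deriv Wq w) * q w^2 - (-(Wq w)) * (2 * q w ^ 1 * deriv q w)) / (q w^2)^2) w :=
      ((hWq_diff w).hasDerivAt.neg).div hq2 (pow_ne_zero 2 (hq0 w hw))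
    refine base.congr_of_eventuallyEq ?_
    exact Filter.eventually_of_mem (hU.mem_nhds hw) (fun x hx => hd1 x hx)
  have step3 : ∀ w ∈ U, ldd h w = L w := by
    intro w hw
    rw [ldd]
    rw [(step2 w hw).deriv, hd1 w hw, hLdef]
    have h1 := hq0 w hw
    have h2 := hW0 w hw
    field_simp
    ring
  have hev : ldd h =ᶠ[𝓝 z₀] L :=
    Filter.eventually_of_mem (hU.mem_nhds hz) (fun x hx => step3 x hx)
  have step4 : Sk 2 h z₀ = deriv (ldd h) z₀ - 1/((2:ℕ):ℂ) * ldd h z₀ * ldd h z₀ := rfl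
  rw [step4, hev.deriv_eq, step3 z₀ hz]
  norm_num

def fB : ℂ → ℂ := fun z => u0 z / v z

lemma u0_diff : Differentiable ℂ u0 := fun z => (hu0 z).differentiableAt
lemma u1_diff : Differentiable ℂ u1 := fun z => (hu1 z).differentiableAt
lemma v_diff : Differentiable ℂ v := fun z => (hv z).differentiableAt
lemma v1_diff : Differentiable ℂ v1 := fun z => (hv1 z).differentiableAt

lemma isOpen_vne : IsOpen {w : ℂ | v w ≠ 0} :=
  isOpen_compl_singleton.preimage v_diff.continuous

lemma key_sk (z : ℂ) (hvz : v z ≠ 0) : Sk 2 fB z = Complex.exp z / 2 := by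
  set L : ℂ → ℂ := fun w => -(2 * v1 w / v w) with hL
  have hcon := sk2_div u0 v (fun _ => (1:ℂ)) L u0_diff v_diff
    (by rw [du0]; exact u1_diff) (by rw [dv]; exact v1_diff)
    (fun x => by rw [dv, du0]; exact (Wf_eq_one x).symm)
    (fun x => by rw [hL, dv]; simp)
    {w : ℂ | v w ≠ 0} isOpen_vne z hvz (fun w hw => hw) (fun w _ => one_ne_zero)
  have hfB : fB = fun w => u0 w / v w := rfl
  rw [hfB, hcon]
  have hLd : HasDerivAt L (-((2 * v2 z * v z - 2 * v1 z * v1 z) / v z ^ 2)) z := by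
    exact (((hv1 z).const_mul (2:ℂ)).div (hv z) hvz).neg
  rw [hLd.deriv, hL]
  simp only
  rw [ODEv]
  field_simp
  ring

lemma key_deriv (z : ℂ) (hvz : v z ≠ 0) : deriv fB z = -1 / v z ^ 2 := by
  have hd := (u0_diff z).hasDerivAt.div ((v_diff z).hasDerivAt) hvz
  have : deriv fB z = (deriv u0 z * v z - u0 z * deriv v z) / v z ^ 2 := hd.deriv
  rw [this, du0, dv]
  have hw := Wf_eq_one z
  rw [Wf] at hw
  rw [show u1 z * v z - u0 z * v1 z = -(u0 z * v1 z - u1 z * v z) by ring, hw]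

lemma key_deriv_ne (z : ℂ) (hvz : v z ≠ 0) : deriv fB z ≠ 0 := by
  rw [key_deriv z hvz]
  exact div_ne_zero (by norm_num) (pow_ne_zero 2 hvz)

lemma key0 (z : ℂ) (hf : AnalyticAt ℂ fB z) : v z ≠ 0 := by
  intro hvz
  have h1 := Wf_eq_one z
  rw [Wf, hvz, mul_zero, sub_zero] at h1
  have hu0z : u0 z ≠ 0 := left_ne_zero_of_mul_eq_one h1
  have hvan : AnalyticAt ℂ v z := (v_diff.analyticAt z)
  rcases hvan.eventually_eq_zero_or_eventually_ne_zero with hev | hev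
  · have h2 : deriv v z = 0 := by
      have : v =ᶠ[𝓝 z] (fun _ => (0:ℂ)) := hev
      rw [this.deriv_eq]
      exact deriv_const z 0
    rw [dv] at h2
    rw [h2, mul_zero] at h1
    exact one_ne_zero h1.symm
  · set M : ℝ := ‖fB z‖ + 1 with hM
    have hM0 : (0:ℝ) < M := by positivity
    set c : ℝ := ‖u0 z‖ / 2 with hc
    have hc0 : (0:ℝ) < c := by
      rw [hc]
      have : 0 < ‖u0 z‖ := norm_pos_iff.2 hu0z
      positivity
    have ev1 : ∀ᶠ w in 𝓝 z, ‖fB w‖ < M := by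
      have h3 := Metric.tendsto_nhds.1 hf.continuousAt 1 one_pos
      filter_upwards [h3] with w hw
      have : ‖fB w - fB z‖ < 1 := by rwa [dist_eq_norm] at hw
      have h4 := norm_add_le (fB w - fB z) (fB z)
      rw [sub_add_cancel] at h4
      rw [hM]
      linarith
    have ev2 : ∀ᶠ w in 𝓝 z, c ≤ ‖u0 w‖ := by
      have h3 := Metric.tendsto_nhds.1 (u0_diff.continuous.continuousAt (x := z)) c hc0
      filter_upwards [h3] with w hw
      rw [dist_eq_norm] at hw
      have h4 := norm_add_le (u0 z - u0 w) (u0 w)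
      rw [sub_add_cancel] at h4
      rw [norm_sub_rev] at hw
      rw [hc] at *
      linarith
    have ev3 : ∀ᶠ w in 𝓝 z, ‖v w‖ < c / M := by
      have h3 := Metric.tendsto_nhds.1 (v_diff.continuous.continuousAt (x := z)) (c/M)
        (div_pos hc0 hM0)
      filter_upwards [h3] with w hw
      rw [dist_eq_norm, hvz, sub_zero] at hw
      exact hw
    have hall := (((ev1.and (ev2.and ev3)).filter_mono nhdsWithin_le_nhds).and hev)
    obtain ⟨w, ⟨hw1, hw2, hw3⟩, hw4⟩ := hall.exists
    have hvpos : 0 < ‖v w‖ := norm_pos_iff.2 hw4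
    have hfw : ‖fB w‖ = ‖u0 w‖ / ‖v w‖ := norm_div _ _
    have h5 : M * ‖v w‖ < c := by
      have := (mul_lt_mul_of_pos_left hw3 hM0)
      rwa [mul_div_cancel₀ c (ne_of_gt hM0)] at this
    have h6 : M < ‖fB w‖ := by
      rw [hfw, lt_div_iff₀ hvpos]
      linarith
    linarith

lemma fB_analyticAt {w : ℂ} (hw : v w ≠ 0) : AnalyticAt ℂ fB w :=
  (u0_diff.analyticAt w).div (v_diff.analyticAt w) hw

lemma fB_mero : MeromorphicOn fB Set.univ := by
  intro x _
  exact ((u0_diff.analyticAt x).meromorphicAt).div ((v_diff.analyticAt x).meromorphicAt)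

lemma v_eventually_ne (z : ℂ) : ∀ᶠ w in 𝓝[≠] z, v w ≠ 0 := by
  rcases (v_diff.analyticAt z).eventually_eq_zero_or_eventually_ne_zero with hev | hev
  · exfalso
    have hvz : v z = 0 := hev.self_of_nhds
    have h2 : deriv v z = 0 := by
      have : v =ᶠ[𝓝 z] (fun _ => (0:ℂ)) := hev
      rw [this.deriv_eq]
      exact deriv_const z 0
    rw [dv] at h2
    have h1 := Wf_eq_one z
    rw [Wf, hvz, h2, mul_zero, mul_zero, sub_zero] at h1
    exact one_ne_zero h1.symm
  · exact hev

lemma fB_noacc : ∀ z ∈ Set.univ, ¬ AccPt z (𝓟 {w : ℂ | ¬ AnalyticAt ℂ fB w}) := by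
  intro z _ hacc
  have hsub : {w : ℂ | ¬ AnalyticAt ℂ fB w} ⊆ {w : ℂ | v w = 0} := by
    intro w hw
    by_contra hvw
    exact hw (fB_analyticAt hvw)
  have hacc2 : AccPt z (𝓟 {w : ℂ | v w = 0}) :=
    hacc.mono (principal_mono.2 hsub)
  have hfreq := accPt_iff_frequently.1 hacc2
  have hev := v_eventually_ne z
  rw [eventually_nhdsWithin_iff] at hev
  obtain ⟨y, ⟨hy1, hy2⟩, hy3⟩ := (hfreq.and_eventually hev).exists
  exact hy3 hy1 hy2

lemma dense_ne (F : ℂ → ℂ) (hF : Differentiable ℂ F) {z₁ : ℂ} (h1 : F z₁ ≠ 0) :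
    Dense {z : ℂ | F z ≠ 0} := by
  rw [dense_iff_inter_open]
  rintro O hO ⟨x, hx⟩
  by_contra hempty
  rw [Set.not_nonempty_iff_eq_empty] at hempty
  have hzero : ∀ y ∈ O, F y = 0 := by
    intro y hy
    by_contra hne
    exact (Set.eq_empty_iff_forall_notMem.1 hempty y) ⟨hy, hne⟩
  have hev : F =ᶠ[𝓝 x] 0 := Filter.eventually_of_mem (hO.mem_nhds hx) hzero
  have heq := (analyticOnNhd_univ_iff_differentiable.2 hF).eqOn_zero_of_preconnected_of_eventuallyEq_zero
    isPreconnected_univ (Set.mem_univ x) hev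
  exact h1 (heq (Set.mem_univ z₁))

lemma not_two_valued (s t : ℂ) (h : ∀ z, fB z = s ∨ fB z = t) : False := by
  obtain ⟨z₀, hz₀⟩ := (v_eventually_ne 0).exists
  have han := fB_analyticAt hz₀
  have hd := key_deriv_ne z₀ hz₀
  have hev : fB =ᶠ[𝓝 z₀] (fun _ => fB z₀) := by
    rcases eq_or_ne s t with hst | hst
    · subst hst
      have hall : ∀ z, fB z = s := fun z => (h z).elim id id
      filter_upwards with w
      rw [hall w, hall z₀]
    · have hr : 0 < ‖s - t‖ := by
        rw [norm_pos_iff, sub_ne_zero]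
        exact hst
      have hcont := Metric.tendsto_nhds.1 han.continuousAt ‖s-t‖ hr
      filter_upwards [hcont] with w hw
      rw [dist_eq_norm] at hw
      rcases h w with hw1 | hw1 <;> rcases h z₀ with hw2 | hw2
      · rw [hw1, hw2]
      · exfalso; rw [hw1, hw2] at hw; exact absurd hw (lt_irrefl _)
      · exfalso; rw [hw1, hw2, norm_sub_rev] at hw; exact absurd hw (lt_irrefl _)
      · rw [hw1, hw2]
  have : deriv fB z₀ = 0 := by
    rw [hev.deriv_eq]
    exact deriv_const _ _
  exact hd this

lemma hexp_helper (cc αα : ℂ) (x : ℂ) :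
    HasDerivAt (fun w => cc * Complex.exp (αα*w)) (cc*αα*Complex.exp (αα*x)) x := by
  have h1 : HasDerivAt (fun w : ℂ => αα*w) αα x := by
    simpa using (hasDerivAt_id x).const_mul αα
  have := (h1.cexp).const_mul cc
  refine this.congr_deriv ?_
  ring

lemma sk_mobius (a b c d α : ℂ) (hα : α ≠ 0) (hdet : a*d - b*c ≠ 0) (z : ℂ)
    (hq : c * Complex.exp (α*z) + d ≠ 0) :
    Sk 2 (fun w => (a * Complex.exp (α*w) + b) / (c * Complex.exp (α*w) + d)) z
      = -α^2/2 := by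
  have hdet' : b*c - a*d ≠ 0 := fun h => hdet (by linear_combination -h)
  set p : ℂ → ℂ := fun w => a * Complex.exp (α*w) + b with hp_def
  set q : ℂ → ℂ := fun w => c * Complex.exp (α*w) + d with hq_def
  have hpd : ∀ x, HasDerivAt p (a*α*Complex.exp (α*x)) x := fun x =>
    (hexp_helper a α x).add_const b
  have hqd : ∀ x, HasDerivAt q (c*α*Complex.exp (α*x)) x := fun x =>
    (hexp_helper c α x).add_const d
  have dp : deriv p = fun x => a*α*Complex.exp (α*x) := funext fun x => (hpd x).deriv
  have dq : deriv q = fun x => c*α*Complex.exp (α*x) := funext fun x => (hqd x).deriv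
  have hp_diff : Differentiable ℂ p := fun x => (hpd x).differentiableAt
  have hq_diff : Differentiable ℂ q := fun x => (hqd x).differentiableAt
  have hp'_diff : Differentiable ℂ (deriv p) := by
    rw [dp]; exact fun x => (hexp_helper (a*α) α x).differentiableAt
  have hq'_diff : Differentiable ℂ (deriv q) := by
    rw [dq]; exact fun x => (hexp_helper (c*α) α x).differentiableAt
  set Wq : ℂ → ℂ := fun w => α*(b*c-a*d) * Complex.exp (α*w) with hWq_def
  have hWne : ∀ x, Wq x ≠ 0 := fun x =>
    mul_ne_zero (mul_ne_zero hα hdet') (Complex.exp_ne_zero _)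
  have hWdef : ∀ x, Wq x = p x * deriv q x - deriv p x * q x := by
    intro x
    rw [dp, dq, hWq_def, hp_def, hq_def]
    simp only
    ring
  have hWd : ∀ x, HasDerivAt Wq (α*(b*c-a*d)*α*Complex.exp (α*x)) x := fun x =>
    hexp_helper (α*(b*c-a*d)) α x
  have dW : deriv Wq = fun x => α*(b*c-a*d)*α*Complex.exp (α*x) :=
    funext fun x => (hWd x).deriv
  set L : ℂ → ℂ := fun w => α - 2*c*α*Complex.exp (α*w) / (c*Complex.exp (α*w) + d)
    with hL_def
  have hLdef : ∀ x, L x = deriv Wq x / Wq x - 2 * deriv q x / q x := by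
    intro x
    rw [dW, dq, hL_def, hWq_def, hq_def]
    simp only
    congr 1
    · rw [eq_div_iff (mul_ne_zero (mul_ne_zero hα hdet') (Complex.exp_ne_zero _))]
      ring
    · ring_nf
  have hU : IsOpen {w : ℂ | q w ≠ 0} := by
    have hcont : Continuous q := hq_diff.continuous
    exact isOpen_compl_singleton.preimage hcont
  have hcon := sk2_div p q Wq L hp_diff hq_diff hp'_diff hq'_diff hWdef hLdef
    {w : ℂ | q w ≠ 0} hU z hq (fun w hw => hw) (fun w _ => hWne w)
  rw [hcon]
  have hnum : HasDerivAt (fun w => 2*c*α*Complex.exp (α*w)) (2*c*α*α*Complex.exp (α*z)) z :=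
    hexp_helper (2*c*α) α z
  have hfrac : HasDerivAt (fun w => 2*c*α*Complex.exp (α*w) / (c*Complex.exp (α*w) + d))
      ((2*c*α*α*Complex.exp (α*z) * (c*Complex.exp (α*z) + d)
        - 2*c*α*Complex.exp (α*z) * (c*α*Complex.exp (α*z))) / (c*Complex.exp (α*z) + d)^2) z :=
    hnum.div (hqd z) hq
  have hLd : HasDerivAt L (0 - (2*c*α*α*Complex.exp (α*z) * (c*Complex.exp (α*z) + d)
        - 2*c*α*Complex.exp (α*z) * (c*α*Complex.exp (α*z))) / (c*Complex.exp (α*z) + d)^2) z := by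
    exact (hasDerivAt_const z α).sub hfrac
  rw [hLd.deriv, hL_def]
  simp only
  field_simp
  ring

lemma fB_not_mobius : ¬ ∃ a b c d α : ℂ, ∀ z : ℂ,
    fB z = (a * Complex.exp (α * z) + b) / (c * Complex.exp (α * z) + d) := by
  rintro ⟨a, b, c, d, α, hfg⟩
  by_cases hα : α = 0
  · exact not_two_valued ((a+b)/(c+d)) ((a+b)/(c+d))
      (fun z => Or.inl (by rw [hfg z, hα]; simp))
  by_cases hdet : a*d - b*c = 0
  · by_cases hc : c = 0
    · by_cases hd0 : d = 0
      · exact not_two_valued 0 0 (fun z => Or.inl (by rw [hfg z, hc, hd0]; simp))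
      · have ha : a = 0 := by
          have h1 : a * d = 0 := by rw [hc] at hdet; linear_combination hdet
          exact (mul_eq_zero.1 h1).resolve_right hd0
        exact not_two_valued (b/d) (b/d)
          (fun z => Or.inl (by rw [hfg z, hc, ha]; simp))
    · refine not_two_valued (a/c) 0 (fun z => ?_)
      have hnum : a * Complex.exp (α*z) + b = (a/c) * (c * Complex.exp (α*z) + d) := by
        field_simp
        linear_combination -hdet
      by_cases hz : c * Complex.exp (α*z) + d = 0
      · right
        rw [hfg z]
        rw [show a * Complex.exp (α*z) + b = 0 by rw [hnum, hz, mul_zero], hz]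
        simp
      · left
        rw [hfg z, hnum, mul_div_assoc, div_self hz, mul_one]
  · by_cases hcd : c = 0 ∧ d = 0
    · obtain ⟨hc, hd0⟩ := hcd
      exact not_two_valued 0 0 (fun z => Or.inl (by rw [hfg z, hc, hd0]; simp))
    · set q : ℂ → ℂ := fun w => c * Complex.exp (α*w) + d with hq_def
      have hqsome : ∃ z, q z ≠ 0 := by
        by_contra hall
        push_neg at hall
        have h1 : c * Complex.exp (α * 0) + d = 0 := hall 0
        have h2 : c * Complex.exp (α * (((Real.pi:ℂ)*I)/α)) + d = 0 := hall _
        simp only [mul_zero, Complex.exp_zero, mul_one] at h1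
        rw [show α * (((Real.pi:ℂ)*I)/α) = (Real.pi:ℂ)*I by field_simp, Complex.exp_pi_mul_I] at h2
        apply hcd
        constructor
        · linear_combination (h1 - h2)/2
        · linear_combination (h1 + h2)/2
      have hq_diff : Differentiable ℂ q := fun x =>
        ((hexp_helper c α x).add_const d).differentiableAt
      obtain ⟨zq, hzq⟩ := hqsome
      obtain ⟨zv, hzv⟩ := (v_eventually_ne 0).exists
      have Dv := dense_ne v v_diff hzv
      have Dq := dense_ne q hq_diff hzq
      have hv'_diff : Differentiable ℂ (fun z => v (z + (Real.pi:ℂ)*I)) :=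
        v_diff.comp (differentiable_id.add_const _)
      have hq'_diff : Differentiable ℂ (fun z => q (z + (Real.pi:ℂ)*I)) :=
        hq_diff.comp (differentiable_id.add_const _)
      have Dv' := dense_ne (fun z => v (z + (Real.pi:ℂ)*I)) hv'_diff (z₁ := zv - (Real.pi:ℂ)*I)
        (by show v (zv - (Real.pi:ℂ)*I + (Real.pi:ℂ)*I) ≠ 0; rw [sub_add_cancel]; exact hzv)
      have Dq' := dense_ne (fun z => q (z + (Real.pi:ℂ)*I)) hq'_diff (z₁ := zq - (Real.pi:ℂ)*I)
        (by show q (zq - (Real.pi:ℂ)*I + (Real.pi:ℂ)*I) ≠ 0; rw [sub_add_cancel]; exact hzq)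
      have Oq : IsOpen {z : ℂ | q z ≠ 0} :=
        isOpen_compl_singleton.preimage hq_diff.continuous
      have Ov' : IsOpen {z : ℂ | v (z + (Real.pi:ℂ)*I) ≠ 0} :=
        isOpen_compl_singleton.preimage hv'_diff.continuous
      have Oq' : IsOpen {z : ℂ | q (z + (Real.pi:ℂ)*I) ≠ 0} :=
        isOpen_compl_singleton.preimage hq'_diff.continuous
      have Dall := Dv.inter_of_isOpen_left
        (Dq.inter_of_isOpen_left (Dv'.inter_of_isOpen_left Dq' Ov') Oq) isOpen_vne
      obtain ⟨z₁, hv1, hq1, hv2, hq2⟩ := Dall.nonempty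
      have hfun : fB = fun w => (a * Complex.exp (α*w) + b) / (c * Complex.exp (α*w) + d) :=
        funext hfg
      have e1 : Complex.exp z₁ / 2 = -α^2/2 := by
        rw [← key_sk z₁ hv1, hfun]
        exact sk_mobius a b c d α hα hdet z₁ hq1
      have e2 : Complex.exp (z₁ + (Real.pi:ℂ)*I) / 2 = -α^2/2 := by
        rw [← key_sk _ hv2, hfun]
        exact sk_mobius a b c d α hα hdet _ hq2
      rw [Complex.exp_add, Complex.exp_pi_mul_I] at e2
      have : Complex.exp z₁ = 0 := by linear_combination e1 - e2
      exact Complex.exp_ne_zero z₁ this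

/-- There is a meromorphic function `f` on `ℂ` whose classical Schwarzian derivative
`S_2(f)` equals `e^z/2` (hence omits `0` and `∞`), but which is not of the form
`(a·e^{αz} + b)/(c·e^{αz} + d)` for any `a, b, c, d, α ∈ ℂ`. -/
theorem exists_meromorphic_schwarzian_omits_zero_not_mobius_exp :
    ∃ f : ℂ → ℂ, MeromorphicOn f Set.univ ∧
      NoAccIn {w : ℂ | ¬ AnalyticAt ℂ f w} Set.univ ∧
      (∀ z : ℂ, AnalyticAt ℂ f z →
        deriv f z ≠ 0 ∧ Sk 2 f z = Complex.exp z / 2) ∧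
      ¬ ∃ a b c d α : ℂ, ∀ z : ℂ,
          f z = (a * Complex.exp (α * z) + b) / (c * Complex.exp (α * z) + d) := by
  refine ⟨fB, fB_mero, fB_noacc, fun z hz => ?_, fB_not_mobius⟩
  have hvz := key0 z hz
  exact ⟨key_deriv_ne z hvz, key_sk z hvz⟩
end
end

section
/- For every k ∈ ℕ with k ≥ 2 and every M ≥ 0, the family M'_{k,M} = { f' : f ∈ M_{k,M} } is not normal on the unit disk 𝔻. Indeed, the meromorphic functions g_n(z) = −1/(n^k·(k−1)·z^{k−1}) satisfy g_n'(z) = 1/(nz)^k and S_k(g_n) ≡ 0, so g_n ∈ M_{k,M} for all n ∈ ℕ, while the sequence (g_n')_n is not normal at 0. -/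
open Complex Filter Set Metric Topology

noncomputable section

/-- The functions `g_n(z) = -1/(n^k·(k-1)·z^{k-1})`. -/
def gseq (k n : ℕ) : ℂ → ℂ := fun z => -1 / ((n : ℂ) ^ k * ((k : ℂ) - 1) * z ^ (k - 1))

section Aux

lemma Cne {k n : ℕ} (hk : 2 ≤ k) (hn : 1 ≤ n) : ((n:ℂ)^k * ((k:ℂ)-1)) ≠ 0 := by
  apply mul_ne_zero
  · exact pow_ne_zero _ (Nat.cast_ne_zero.mpr (by omega))
  · intro h
    have : (k:ℂ) = 1 := by linear_combination h
    have : k = 1 := by exact_mod_cast this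
    omega

lemma gseq_eq {k n : ℕ} (hk : 2 ≤ k) (z : ℂ) :
    gseq k n z = (-((n:ℂ)^k * ((k:ℂ)-1))⁻¹) * z ^ (-((k:ℤ)-1)) := by
  have h1 : (-((k:ℤ)-1)) = -((k-1 : ℕ) : ℤ) := by omega
  rw [h1, zpow_neg, zpow_natCast, gseq, div_eq_mul_inv, mul_inv]
  ring

lemma zpow_deriv_aux (c : ℂ) (m : ℤ) {z : ℂ} (hz : z ≠ 0) :
    deriv (fun w => c * w ^ m) z = c * (m * z ^ (m - 1)) :=
  ((hasDerivAt_zpow m z (Or.inl hz)).const_mul c).deriv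

lemma deriv_congr_ne {f g : ℂ → ℂ} (h : ∀ w : ℂ, w ≠ 0 → f w = g w) {z : ℂ} (hz : z ≠ 0) :
    deriv f z = deriv g z := by
  apply Filter.EventuallyEq.deriv_eq
  filter_upwards [isOpen_compl_singleton.mem_nhds (by simpa using hz : z ∈ ({0}ᶜ : Set ℂ))] with w hw
  exact h w hw

lemma deriv_gseq {k n : ℕ} (hk : 2 ≤ k) (hn : 1 ≤ n) {z : ℂ} (hz : z ≠ 0) :
    deriv (gseq k n) z = ((n:ℂ)^k)⁻¹ * z ^ (-(k:ℤ)) := by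
  have := deriv_congr_ne (f := gseq k n)
    (g := fun w => (-((n:ℂ)^k * ((k:ℂ)-1))⁻¹) * w ^ (-((k:ℤ)-1))) (fun w _ => gseq_eq hk w) hz
  rw [this, zpow_deriv_aux _ _ hz]
  have h2 : (-((k:ℤ)-1) - 1) = -(k:ℤ) := by omega
  rw [h2]
  have hC := Cne (n := n) hk hn
  have hk1 : ((k:ℂ)-1) ≠ 0 := fun h => by
    have : (k:ℂ) = 1 := by linear_combination h
    have : k = 1 := by exact_mod_cast this
    omega
  have hnk : ((n:ℂ)^k) ≠ 0 := pow_ne_zero _ (Nat.cast_ne_zero.mpr (by omega))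
  field_simp
  push_cast
  ring

lemma kne {k : ℕ} (hk : 2 ≤ k) : (k:ℂ) ≠ 0 := Nat.cast_ne_zero.mpr (by omega)

lemma deriv2_gseq {k n : ℕ} (hk : 2 ≤ k) (hn : 1 ≤ n) {z : ℂ} (hz : z ≠ 0) :
    deriv (deriv (gseq k n)) z = ((n:ℂ)^k)⁻¹ * (-(k:ℤ) * z ^ (-(k:ℤ) - 1)) := by
  have := deriv_congr_ne (f := deriv (gseq k n))
    (g := fun w => ((n:ℂ)^k)⁻¹ * w ^ (-(k:ℤ))) (fun w hw => deriv_gseq hk hn hw) hz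
  rw [this, zpow_deriv_aux _ _ hz]
  push_cast
  ring

lemma ldd_gseq {k n : ℕ} (hk : 2 ≤ k) (hn : 1 ≤ n) {z : ℂ} (hz : z ≠ 0) :
    ldd (gseq k n) z = -(k:ℂ) / z := by
  rw [ldd, deriv2_gseq hk hn hz, deriv_gseq hk hn hz]
  have hnk : ((n:ℂ)^k) ≠ 0 := pow_ne_zero _ (Nat.cast_ne_zero.mpr (by omega))
  have hzk : z ^ (-(k:ℤ)) ≠ 0 := zpow_ne_zero _ hz
  rw [show (-(k:ℤ) - 1) = -(k:ℤ) + (-1) by ring, zpow_add₀ hz, zpow_neg_one]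
  field_simp
  push_cast
  ring

lemma SRec_one {k n : ℕ} (hk : 2 ≤ k) (hn : 1 ≤ n) {z : ℂ} (hz : z ≠ 0) :
    SRec k (gseq k n) 1 z = 0 := by
  have hd : deriv (ldd (gseq k n)) z = (k:ℂ) / z ^ 2 := by
    have := deriv_congr_ne (f := ldd (gseq k n))
      (g := fun w => -(k:ℂ) * w⁻¹) (fun w hw => by rw [ldd_gseq hk hn hw]; ring) hz
    rw [this, ((hasDerivAt_inv hz).const_mul (-(k:ℂ))).deriv]
    field_simp
  show deriv (SRec k (gseq k n) 0) z - (1/(k:ℂ)) * ldd (gseq k n) z * SRec k (gseq k n) 0 z = 0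
  show deriv (ldd (gseq k n)) z - (1/(k:ℂ)) * ldd (gseq k n) z * ldd (gseq k n) z = 0
  rw [hd, ldd_gseq hk hn hz]
  have := kne hk
  field_simp
  ring

lemma SRec_eq_zero {k n : ℕ} (hk : 2 ≤ k) (hn : 1 ≤ n) (m : ℕ) (hm : 1 ≤ m) :
    ∀ z : ℂ, z ≠ 0 → SRec k (gseq k n) m z = 0 := by
  induction m with
  | zero => omega
  | succ m ih =>
    rcases Nat.lt_or_ge m 1 with hm1 | hm1
    · interval_cases m
      exact fun z hz => SRec_one hk hn hz
    · intro z hz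
      show deriv (SRec k (gseq k n) m) z - (1/(k:ℂ)) * ldd (gseq k n) z * SRec k (gseq k n) m z = 0
      have hd : deriv (SRec k (gseq k n) m) z = 0 := by
        rw [deriv_congr_ne (g := fun _ => (0:ℂ)) (ih hm1) hz, deriv_const]
      rw [hd, ih hm1 z hz]
      ring

lemma Sk_gseq {k n : ℕ} (hk : 2 ≤ k) (hn : 1 ≤ n) {z : ℂ} (hz : z ≠ 0) :
    Sk k (gseq k n) z = 0 := by
  have h : k + 1 - 2 = k - 1 := by omega
  rw [Sk, SGen, h]
  exact SRec_eq_zero hk hn (k-1) (by omega) z hz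

end Aux

lemma gseq_inj_norm {k n : ℕ} (hk : 2 ≤ k) (hn : 1 ≤ n) {w₁ w₂ : ℂ}
    (h1 : w₁ ≠ 0) (h2 : w₂ ≠ 0) (hlt : ‖w₂‖ < ‖w₁‖)
    (he : gseq k n w₁ = gseq k n w₂) : False := by
  have hC := Cne (n := n) hk hn
  have hp1 : w₁ ^ (k-1) ≠ 0 := pow_ne_zero _ h1
  have hp2 : w₂ ^ (k-1) ≠ 0 := pow_ne_zero _ h2
  rw [gseq, gseq] at he
  rw [div_eq_div_iff (mul_ne_zero hC hp1) (mul_ne_zero hC hp2)] at he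
  have he2 : w₂ ^ (k-1) = w₁ ^ (k-1) := mul_left_cancel₀ hC (by linear_combination -he)
  have h3 := congrArg norm he2
  rw [norm_pow, norm_pow] at h3
  have h4 : ‖w₂‖ ^ (k-1) < ‖w₁‖ ^ (k-1) := pow_lt_pow_left₀ hlt (norm_nonneg _) (by omega)
  linarith

lemma nonconst_gseq {k n : ℕ} (hk : 2 ≤ k) (hn : 1 ≤ n) : NonConstOn (gseq k n) unitDisk := by
  rintro ⟨c, z, hz, hev⟩
  obtain ⟨r, hr, hsub⟩ := Metric.mem_nhdsWithin_iff.mp hev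
  rcases eq_or_ne z 0 with rfl | hz0
  · have key : ∀ a : ℝ, 0 < a → a < r → gseq k n ((a:ℝ):ℂ) = c := by
      intro a ha har
      apply hsub
      refine ⟨?_, ?_⟩
      · rw [mem_ball, dist_zero_right, Complex.norm_real, Real.norm_eq_abs, abs_of_pos ha]
        exact har
      · simpa using Complex.ofReal_ne_zero.mpr (ne_of_gt ha)
    refine gseq_inj_norm hk hn (w₁ := ((r/2:ℝ):ℂ)) (w₂ := ((r/3:ℝ):ℂ))
      (Complex.ofReal_ne_zero.mpr (by positivity)) (Complex.ofReal_ne_zero.mpr (by positivity))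
      ?_ ?_
    · rw [Complex.norm_real, Complex.norm_real, Real.norm_eq_abs, Real.norm_eq_abs,
        abs_of_pos (by positivity), abs_of_pos (by positivity)]
      linarith
    · rw [key _ (by positivity) (by linarith), key _ (by positivity) (by linarith)]
  · have hzn : (0:ℝ) < ‖z‖ := norm_pos_iff.mpr hz0
    have key : ∀ a : ℝ, 0 < a → a < 1 → gseq k n (z * ((1 + a * r / ‖z‖ : ℝ) : ℂ)) = c := by
      intro a ha ha1
      have hfac : (0:ℝ) < 1 + a * r / ‖z‖ := by positivity
      apply hsub
      have h1 : z * ((1 + a * r / ‖z‖ : ℝ) : ℂ) - z = z * ((a * r / ‖z‖ : ℝ) : ℂ) := by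
        push_cast; ring
      refine ⟨?_, ?_⟩
      · rw [mem_ball, dist_eq_norm]
        rw [h1, norm_mul, Complex.norm_real, Real.norm_eq_abs, abs_of_pos (by positivity)]
        have h2 : ‖z‖ * (a * r / ‖z‖) = a * r := by
          rw [← mul_div_assoc]; exact mul_div_cancel_left₀ _ hzn.ne'
        rw [h2]
        nlinarith
      · simp only [Set.mem_compl_iff, Set.mem_singleton_iff]
        intro hEq
        have h3 : z * ((a * r / ‖z‖ : ℝ) : ℂ) = 0 := by rw [← h1, hEq]; ring
        rcases mul_eq_zero.mp h3 with h' | h'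
        · exact hz0 h'
        · exact absurd h' (Complex.ofReal_ne_zero.mpr (by positivity))
    have hnorm : ∀ a : ℝ, 0 < a → ‖z * ((1 + a * r / ‖z‖ : ℝ) : ℂ)‖ = ‖z‖ * (1 + a * r / ‖z‖) := by
      intro a ha
      rw [norm_mul, Complex.norm_real, Real.norm_eq_abs, abs_of_pos (by positivity)]
    refine gseq_inj_norm hk hn (w₁ := z * ((1 + (1/2) * r / ‖z‖ : ℝ) : ℂ))
      (w₂ := z * ((1 + (1/3) * r / ‖z‖ : ℝ) : ℂ))
      (mul_ne_zero hz0 (Complex.ofReal_ne_zero.mpr (by positivity)))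
      (mul_ne_zero hz0 (Complex.ofReal_ne_zero.mpr (by positivity))) ?_ ?_
    · rw [hnorm _ (by norm_num), hnorm _ (by norm_num)]
      have h5 : (1:ℝ)/3 * r / ‖z‖ < 1/2 * r / ‖z‖ := by gcongr; linarith
      nlinarith
    · rw [key _ (by norm_num) (by norm_num), key _ (by norm_num) (by norm_num)]

lemma mero_gseq {k n : ℕ} : MeromorphicOn (gseq k n) unitDisk := by
  have h : MeromorphicOn
      ((fun _ : ℂ => (-1:ℂ)) / (fun z : ℂ => (n:ℂ)^k * ((k:ℂ)-1) * z^(k-1))) unitDisk :=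
    MeromorphicOn.div (.const _) fun x _ =>
      (analyticAt_const.mul (analyticAt_id.pow _)).meromorphicAt
  exact h

lemma noacc_zero {S : Set ℂ} (hS : S ⊆ {0}) : ∀ z : ℂ, ¬ AccPt z (𝓟 S) := by
  intro z hacc
  have h0 : ({0}ᶜ : Set ℂ) ∈ 𝓝[≠] z := by
    rcases eq_or_ne z 0 with rfl | hz
    · exact self_mem_nhdsWithin
    · exact mem_nhdsWithin_of_mem_nhds (isOpen_compl_singleton.mem_nhds (by simpa using hz))
  have hmem : ({0}ᶜ ∩ S : Set ℂ) ∈ 𝓝[≠] z ⊓ 𝓟 S :=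
    Filter.inter_mem (Filter.mem_inf_of_left h0)
      (Filter.mem_inf_of_right (Filter.mem_principal_self S))
  have hempty : ({0}ᶜ ∩ S : Set ℂ) = ∅ := by
    ext w
    simp only [Set.mem_inter_iff, Set.mem_compl_iff, Set.mem_singleton_iff,
      Set.mem_empty_iff_false, iff_false]
    rintro ⟨hw, hwS⟩; exact hw (hS hwS)
  rw [hempty] at hmem
  exact hacc.ne (Filter.empty_mem_iff_bot.mp hmem)

lemma gseq_mem_MFam {k n : ℕ} (hk : 2 ≤ k) (hn : 1 ≤ n) {M : ℝ} (hM : 0 ≤ M) :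
    gseq k n ∈ MFam k M := by
  refine ⟨mero_gseq, nonconst_gseq hk hn, fun _ => 0, analyticOnNhd_const, by intro z _; simpa using hM, ?_⟩
  intro z _ hacc
  refine noacc_zero ?_ z hacc
  rintro w ⟨-, hw⟩
  simp only [Set.mem_singleton_iff]
  by_contra hw0
  exact hw (by simpa using Sk_gseq hk hn hw0)

lemma deriv_gseq' {k n : ℕ} (hk : 2 ≤ k) (hn : 1 ≤ n) {z : ℂ} (hz : z ≠ 0) :
    deriv (gseq k n) z = 1/((n:ℂ)*z)^k := by
  rw [deriv_gseq hk hn hz, zpow_neg, zpow_natCast, mul_pow, one_div, mul_inv]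

lemma sphDist_coe_coe (z w : ℂ) :
    sphDist (z : OnePoint ℂ) (w : OnePoint ℂ)
      = ‖z - w‖ / (Real.sqrt (1+‖z‖^2) * Real.sqrt (1+‖w‖^2)) := rfl

lemma sqrt_le_one_add {x : ℝ} (hx : 0 ≤ x) : Real.sqrt (1 + x^2) ≤ 1 + x := by
  rw [show (1+x) = Real.sqrt ((1+x)^2) from (Real.sqrt_sq (by positivity)).symm]
  exact Real.sqrt_le_sqrt (by nlinarith)

lemma sphDist_lt_bound {z w : ℂ} {ε : ℝ} (h : sphDist (z : OnePoint ℂ) (w : OnePoint ℂ) < ε) :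
    ‖z - w‖ < ε * ((1+‖z‖) * (1+‖w‖)) := by
  rw [sphDist_coe_coe] at h
  have hs0 : 0 < Real.sqrt (1+‖z‖^2) := Real.sqrt_pos.mpr (by positivity)
  have ht0 : 0 < Real.sqrt (1+‖w‖^2) := Real.sqrt_pos.mpr (by positivity)
  have hε : 0 < ε := lt_of_le_of_lt (by positivity) h
  rw [div_lt_iff₀ (by positivity)] at h
  have h1 := sqrt_le_one_add (norm_nonneg z)
  have h2 := sqrt_le_one_add (norm_nonneg w)
  have hst : Real.sqrt (1+‖z‖^2) * Real.sqrt (1+‖w‖^2) ≤ (1+‖z‖) * (1+‖w‖) :=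
    mul_le_mul h1 h2 ht0.le (by positivity)
  nlinarith

lemma not_norm_at_zero {k : ℕ} (hk : 2 ≤ k) :
    ∀ U ∈ 𝓝 (0 : ℂ), ¬ ∃ φ : ℕ → ℕ, StrictMono φ ∧ ∃ g : ℂ → OnePoint ℂ,
      TendstoLocUnifSph (fun m => deriv (gseq k (φ m + 1))) g (U ∩ unitDisk) := by
  rintro U hU ⟨φ, hφ, g, hg⟩
  obtain ⟨t, ht, hev⟩ := hg (1/100) (by norm_num) 0
    ⟨mem_of_mem_nhds hU, by simp [unitDisk]⟩
  rw [mem_nhdsWithin] at ht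
  obtain ⟨V, hVopen, hV0, hVsub⟩ := ht
  obtain ⟨δ, hδ, hball⟩ := Metric.mem_nhds_iff.mp (Filter.inter_mem (hVopen.mem_nhds hV0) hU)
  set δ' : ℝ := min δ 1 with hδ'def
  have hδ' : 0 < δ' := lt_min hδ one_pos
  have key_mem : ∀ y : ℂ, ‖y‖ < δ' → y ∈ t := by
    intro y hy
    have hyb : y ∈ ball (0:ℂ) δ := by
      rw [mem_ball, dist_zero_right]; exact lt_of_lt_of_le hy (min_le_left _ _)
    have h2 := hball hyb
    refine hVsub ⟨h2.1, h2.2, ?_⟩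
    rw [unitDisk, mem_ball, dist_zero_right]; exact lt_of_lt_of_le hy (min_le_right _ _)
  obtain ⟨N, hN⟩ := Filter.eventually_atTop.mp hev
  set m : ℕ := max N (Nat.ceil (1/δ')) with hmdef
  set A : ℕ := φ m + 1 with hAdef
  have hA1 : 1 ≤ A := le_add_self
  have hAne : ((A:ℂ)) ≠ 0 := Nat.cast_ne_zero.mpr (by omega)
  have hAR : (0:ℝ) < A := by positivity
  set y : ℂ := 1/(A:ℂ) with hydef
  have hy0 : y ≠ 0 := by rw [hydef]; exact one_div_ne_zero hAne
  have hynorm : ‖y‖ = 1/(A:ℝ) := by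
    rw [hydef, norm_div, norm_one, Complex.norm_natCast]
  have hAbig : 1/δ' < (A:ℝ) := by
    have h1 : (Nat.ceil (1/δ') : ℝ) < A := by
      have : Nat.ceil (1/δ') < A := by
        have hm : Nat.ceil (1/δ') ≤ m := le_max_right _ _
        have hle : m ≤ φ m := hφ.le_apply
        omega
      exact_mod_cast this
    exact lt_of_le_of_lt (Nat.le_ceil _) h1
  have hyδ : ‖y‖ < δ' := by
    rw [hynorm, div_lt_iff₀ hAR]
    rw [div_lt_iff₀ hδ'] at hAbig
    linarith
  have hyt : y ∈ t := key_mem y hyδ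
  have h1 := hN m (le_max_left _ _) y hyt
  simp only [] at h1
  have hd1 : deriv (gseq k (φ m + 1)) y = 1 := by
    rw [deriv_gseq' hk hA1 hy0, hydef, mul_one_div, div_self hAne, one_pow, div_one]
  set m' : ℕ := max N (100 * A) with hm'def
  set B : ℕ := φ m' + 1 with hBdef
  have hB1 : 1 ≤ B := le_add_self
  have hBne : ((B:ℂ)) ≠ 0 := Nat.cast_ne_zero.mpr (by omega)
  have hBR : (0:ℝ) < B := by positivity
  have h2 := hN m' (le_max_left _ _) y hyt
  simp only [] at h2
  have hd2 : deriv (gseq k (φ m' + 1)) y = ((A:ℂ)/(B:ℂ))^k := by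
    rw [deriv_gseq' hk hB1 hy0, hydef]
    rw [show ((B:ℕ):ℂ) * (1/((A:ℕ):ℂ)) = ((B:ℕ):ℂ)/((A:ℕ):ℂ) by ring, one_div, ← inv_pow,
      inv_div]
  have hBbig : 100 * (A:ℝ) ≤ B := by
    have : 100 * A ≤ B := by
      have hm : 100 * A ≤ m' := le_max_right _ _
      have hle : m' ≤ φ m' := hφ.le_apply
      omega
    exact_mod_cast this
  have hnB : ‖((A:ℂ)/(B:ℂ))^k‖ ≤ 1/100 := by
    rw [norm_pow, norm_div, Complex.norm_natCast, Complex.norm_natCast]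
    have hAB : (A:ℝ)/B ≤ 1/100 := by
      rw [div_le_div_iff₀ hBR (by norm_num)]
      linarith
    calc ((A:ℝ)/B)^k ≤ (A:ℝ)/B := by
          apply pow_le_of_le_one (by positivity) (le_trans hAB (by norm_num)) (by omega)
      _ ≤ 1/100 := hAB
  cases hgy : g y with
  | infty =>
    rw [hgy, hd1] at h1
    have he : sphDist ((1:ℂ) : OnePoint ℂ) (OnePoint.infty) = 1 / Real.sqrt 2 := by
      show (1:ℝ) / Real.sqrt (1+‖(1:ℂ)‖^2) = 1 / Real.sqrt 2
      norm_num
    rw [he] at h1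
    have h2s : Real.sqrt 2 ≤ 2 := by
      nlinarith [Real.sq_sqrt (show (0:ℝ) ≤ 2 by norm_num), Real.sqrt_nonneg 2]
    have h2p : (0:ℝ) < Real.sqrt 2 := Real.sqrt_pos.mpr (by norm_num)
    rw [div_lt_iff₀ h2p] at h1
    nlinarith
  | coe w =>
    rw [hgy, hd1] at h1
    rw [hgy, hd2] at h2
    have b1 := sphDist_lt_bound (w := w) h1
    have b2 := sphDist_lt_bound (w := w) h2
    set a : ℂ := ((A:ℂ)/(B:ℂ))^k with hadef
    rw [norm_one] at b1
    have hu : 0 ≤ ‖a‖ := norm_nonneg a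
    have hx : 0 ≤ ‖w‖ := norm_nonneg w
    have haux : (1/100 : ℝ) * ((1 + ‖a‖) * (1 + ‖w‖)) ≤ (1/100) * ((101/100) * (1 + ‖w‖)) := by
      nlinarith
    have b2' : ‖a - w‖ < (1/100) * ((101/100) * (1 + ‖w‖)) := lt_of_lt_of_le b2 haux
    have tri : ‖(1:ℂ) - a‖ ≤ ‖(1:ℂ) - w‖ + ‖w - a‖ := by
      have := dist_triangle (1:ℂ) w a
      simpa [dist_eq_norm] using this
    have low : 1 - ‖a‖ ≤ ‖(1:ℂ) - a‖ := by
      have := norm_sub_norm_le (1:ℂ) a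
      simpa using this
    have wa : ‖w‖ - ‖a‖ ≤ ‖w - a‖ := norm_sub_norm_le w a
    have hrev : ‖w - a‖ = ‖a - w‖ := norm_sub_rev w a
    linarith


/-- For `k ≥ 2` and `M ≥ 0` the family `M'_{k,M} = {f' : f ∈ M_{k,M}}` is not normal
on `𝔻`: the functions `g_n(z) = -1/(n^k·(k-1)·z^{k-1})` satisfy `g_n'(z) = 1/(nz)^k`
and `S_k(g_n) ≡ 0`, so `g_n ∈ M_{k,M}` for all `n ≥ 1`, while `(g_n')_n` is not
normal at `0`. -/
theorem MFam_deriv_not_normal (k : ℕ) (hk : 2 ≤ k) (M : ℝ) (hM : 0 ≤ M) :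
    (∀ n : ℕ, 1 ≤ n → gseq k n ∈ MFam k M) ∧
    (∀ n : ℕ, 1 ≤ n → ∀ z : ℂ, z ≠ 0 → deriv (gseq k n) z = 1 / ((n : ℂ) * z) ^ k) ∧
    (∀ U ∈ 𝓝 (0 : ℂ), ¬ ∃ φ : ℕ → ℕ, StrictMono φ ∧ ∃ g : ℂ → OnePoint ℂ,
        TendstoLocUnifSph (fun m => deriv (gseq k (φ m + 1))) g (U ∩ unitDisk)) ∧
    ¬ NormalOn {g | ∃ f ∈ MFam k M, g = deriv f} unitDisk := by
  refine ⟨fun n hn => gseq_mem_MFam hk hn hM,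
    fun n hn z hz => deriv_gseq' hk hn hz, not_norm_at_zero hk, ?_⟩
  intro hnorm
  obtain ⟨φ, hφ, g, hg⟩ := hnorm (fun n => deriv (gseq k (n+1)))
    (fun n => ⟨gseq k (n+1), gseq_mem_MFam hk (by omega) hM, rfl⟩)
  exact not_norm_at_zero hk Set.univ Filter.univ_mem
    ⟨φ, hφ, g, by rw [Set.univ_inter]; exact hg⟩
end
end

section
/- For every k ∈ ℕ with k ≥ 2 and every M ≥ 0, the family M^{f'/f}_{k,M} = { f'/f : f ∈ M_{k,M} } is not normal on the unit disk 𝔻. Indeed, the meromorphic functions h_n(z) = z^{1−k} + n satisfy h_n'(z) = (1−k)·z^{−k}, (h_n'/h_n)(z) = (1−k)/(z·(1 + n·z^{k−1})), and S_k(h_n) ≡ 0, so h_n ∈ M_{k,M} for all n ∈ ℕ, while the sequence (h_n'/h_n)_n is not normal at 0. -/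
open Complex Filter Set Metric Topology

noncomputable section

/-- The functions `h_n(z) = z^{1-k} + n`. -/
def hseq (k n : ℕ) : ℂ → ℂ := fun z => 1 / z ^ (k - 1) + (n : ℂ)

namespace Aux

variable {k n : ℕ} {z : ℂ}

lemma hseq_eq (k n : ℕ) : hseq k n = fun z : ℂ => z ^ (-((k - 1 : ℕ) : ℤ)) + (n : ℂ) := by
  funext z
  simp [hseq, zpow_neg, zpow_natCast, one_div]

lemma hseq_hasDeriv (hk : 2 ≤ k) (hz : z ≠ 0) :
    HasDerivAt (hseq k n) ((1 - (k : ℂ)) / z ^ k) z := by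
  rw [hseq_eq]
  have h := (hasDerivAt_zpow (-((k - 1 : ℕ) : ℤ)) z (Or.inl hz)).add_const (n : ℂ)
  refine h.congr_deriv ?_
  have hm : ((k - 1 : ℕ) : ℤ) = (k : ℤ) - 1 := by omega
  rw [hm, show (-((k : ℤ) - 1) - 1) = -(k : ℤ) by ring, zpow_neg, zpow_natCast,
    div_eq_mul_inv]
  push_cast
  ring

lemma hseq_deriv (hk : 2 ≤ k) (hz : z ≠ 0) :
    deriv (hseq k n) z = (1 - (k : ℂ)) / z ^ k :=
  (hseq_hasDeriv hk hz).deriv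

lemma hseq_ratio (hk : 2 ≤ k) (hz : z ≠ 0) :
    deriv (hseq k n) z / hseq k n z
      = (1 - (k : ℂ)) / (z * (1 + (n : ℂ) * z ^ (k - 1))) := by
  rw [hseq_deriv hk hz]
  show ((1 - (k : ℂ)) / z ^ k) / (1 / z ^ (k - 1) + (n : ℂ)) = _
  rw [div_div]
  congr 1
  have hzk : z ^ k = z ^ (k - 1) * z := by
    conv_lhs => rw [show k = (k - 1) + 1 by omega]
    rw [pow_succ]
  have hzp : z ^ (k - 1) ≠ 0 := pow_ne_zero _ hz
  rw [hzk]
  field_simp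

end Aux
namespace Aux2
open Aux

variable {k n : ℕ} {z : ℂ}

lemma deriv_eventually (hk : 2 ≤ k) (n : ℕ) (hz : z ≠ 0) :
    deriv (hseq k n) =ᶠ[𝓝 z] fun w => (1 - (k : ℂ)) / w ^ k := by
  filter_upwards [compl_singleton_mem_nhds hz] with w hw
  exact hseq_deriv hk hw

lemma hseq_deriv2 (hk : 2 ≤ k) (hz : z ≠ 0) :
    deriv (deriv (hseq k n)) z = (1 - (k : ℂ)) * (-(k : ℂ)) * (z ^ (k + 1))⁻¹ := by
  rw [(deriv_eventually hk n hz).deriv_eq]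
  have heq : (fun w : ℂ => (1 - (k : ℂ)) / w ^ k) = fun w : ℂ => (1 - (k : ℂ)) * w ^ (-(k : ℤ)) := by
    funext w
    rw [div_eq_mul_inv, zpow_neg, zpow_natCast]
  rw [heq]
  have h := ((hasDerivAt_zpow (-(k : ℤ)) z (Or.inl hz)).const_mul (1 - (k : ℂ))).deriv
  rw [h, show (-(k : ℤ) - 1) = -((k + 1 : ℕ) : ℤ) by push_cast; ring, zpow_neg, zpow_natCast]
  push_cast
  ring

lemma ldd_hseq (hk : 2 ≤ k) (hz : z ≠ 0) :
    ldd (hseq k n) z = -(k : ℂ) / z := by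
  have h1k : (1 : ℂ) - (k : ℂ) ≠ 0 := by
    rw [sub_ne_zero]
    intro h
    have : (k : ℂ) = ((1 : ℕ) : ℂ) := by rw [← h]; norm_num
    rw [Nat.cast_inj] at this
    omega
  have hzk : z ^ k ≠ 0 := pow_ne_zero _ hz
  have hzk1 : z ^ (k + 1) ≠ 0 := pow_ne_zero _ hz
  rw [ldd, hseq_deriv2 hk hz, hseq_deriv hk hz]
  field_simp
  ring

lemma ldd_eventually (hk : 2 ≤ k) (n : ℕ) (hz : z ≠ 0) :
    ldd (hseq k n) =ᶠ[𝓝 z] fun w => -(k : ℂ) * w⁻¹ := by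
  filter_upwards [compl_singleton_mem_nhds hz] with w hw
  rw [ldd_hseq hk hw, div_eq_mul_inv]

lemma srec_one (hk : 2 ≤ k) (hz : z ≠ 0) :
    SRec k (hseq k n) 1 z = 0 := by
  have hkC : (k : ℂ) ≠ 0 := Nat.cast_ne_zero.mpr (by omega)
  show deriv (SRec k (hseq k n) 0) z
      - (1 / (k : ℂ)) * ldd (hseq k n) z * SRec k (hseq k n) 0 z = 0
  show deriv (ldd (hseq k n)) z - (1 / (k : ℂ)) * ldd (hseq k n) z * ldd (hseq k n) z = 0
  rw [(ldd_eventually hk n hz).deriv_eq, ((hasDerivAt_inv hz).const_mul (-(k:ℂ))).deriv,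
    ldd_hseq hk hz]
  field_simp
  ring

lemma srec_ge_one (hk : 2 ≤ k) (n : ℕ) :
    ∀ j, 1 ≤ j → ∀ z : ℂ, z ≠ 0 → SRec k (hseq k n) j z = 0 := by
  intro j hj
  induction j, hj using Nat.le_induction with
  | base => exact fun z hz => srec_one hk hz
  | succ j hj ih =>
    intro z hz
    show deriv (SRec k (hseq k n) j) z
        - (1 / (k : ℂ)) * ldd (hseq k n) z * SRec k (hseq k n) j z = 0
    have hev : SRec k (hseq k n) j =ᶠ[𝓝 z] fun _ => (0 : ℂ) := by
      filter_upwards [compl_singleton_mem_nhds hz] with w hw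
      exact ih w hw
    rw [hev.deriv_eq, deriv_const, ih z hz]
    ring

lemma sk_hseq (hk : 2 ≤ k) (n : ℕ) (hz : z ≠ 0) :
    Sk k (hseq k n) z = 0 := by
  show SRec k (hseq k n) (k + 1 - 2) z = 0
  exact srec_ge_one hk n _ (by omega) z hz

end Aux2
namespace Aux3
open Aux Aux2

lemma hseq_mem {k : ℕ} (hk : 2 ≤ k) {M : ℝ} (hM : 0 ≤ M) {n : ℕ} (hn : 1 ≤ n) :
    hseq k n ∈ MFam k M := by
  refine ⟨?_, ?_, fun _ => 0, analyticOnNhd_const, fun z _ => by simpa using hM, ?_⟩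
  · -- meromorphic
    intro x hx
    have h1 : MeromorphicAt (fun z : ℂ => 1 / z ^ (k - 1)) x := by
      have h := (((MeromorphicAt.id x).pow (k - 1)).inv).add (MeromorphicAt.const (n:ℂ) x)
      have h2 := ((MeromorphicAt.id x).pow (k - 1)).inv
      have : ((id : ℂ → ℂ) ^ (k - 1))⁻¹ = fun z : ℂ => 1 / z ^ (k - 1) := by
        funext z; simp [one_div]
      rwa [this] at h2
    have h := h1.add (MeromorphicAt.const (n : ℂ) x)
    have : (fun z : ℂ => 1 / z ^ (k - 1)) + (fun _ : ℂ => (n : ℂ)) = hseq k n := by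
      funext z; simp [hseq]
    rwa [this] at h
  · -- non-constant
    rintro ⟨c, z, hz, hev⟩
    obtain ⟨ε, hε, hsub⟩ := Metric.mem_nhdsWithin_iff.mp hev
    obtain ⟨u, hu1, hzu⟩ : ∃ u : ℂ, ‖u‖ = 1 ∧ z = (‖z‖ : ℝ) * u := by
      by_cases h : z = 0
      · exact ⟨1, by simp, by simp [h]⟩
      · refine ⟨(‖z‖ : ℂ)⁻¹ * z, ?_, ?_⟩
        · rw [norm_mul, norm_inv, Complex.norm_real, norm_norm,
            inv_mul_cancel₀ (norm_ne_zero_iff.mpr h)]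
        · have : (‖z‖ : ℂ) ≠ 0 := by
            simpa using norm_ne_zero_iff.mpr h
          rw [← mul_assoc, mul_comm ((‖z‖:ℂ)) ((‖z‖:ℂ))⁻¹, inv_mul_cancel₀ this, one_mul]
    obtain ⟨r0, hr0⟩ : ∃ r0 : ℝ, r0 = ‖z‖ := ⟨‖z‖, rfl⟩
    rw [← hr0] at hzu
    have hr0nn : 0 ≤ r0 := hr0 ▸ norm_nonneg z
    have key : ∀ s : ℝ, 0 < s → |s - r0| < ε → s ≠ r0 →
        ‖c - (n : ℂ)‖ = 1 / s ^ (k - 1) := by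
      intro s hs hsε hsne
      set w : ℂ := (s : ℝ) * u with hw
      have hwz : w - z = ((s - r0 : ℝ) : ℂ) * u := by
        rw [hw, hzu]; push_cast; ring
      have hwznorm : ‖w - z‖ = |s - r0| := by
        rw [hwz, norm_mul, hu1, mul_one, Complex.norm_real, Real.norm_eq_abs]
      have hwmem : w ∈ Metric.ball z ε ∩ {z}ᶜ := by
        constructor
        · rw [Metric.mem_ball, dist_eq_norm, hwznorm]; exact hsε
        · simp only [Set.mem_compl_iff, Set.mem_singleton_iff]
          intro h
          apply hsne
          have : ‖w - z‖ = 0 := by rw [h, sub_self, norm_zero]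
          rw [hwznorm, abs_eq_zero, sub_eq_zero] at this
          exact this
      have hcw : hseq k n w = c := hsub hwmem
      have hwn : ‖w‖ = s := by
        rw [hw, norm_mul, hu1, mul_one, Complex.norm_real, Real.norm_eq_abs, abs_of_pos hs]
      have : c - (n : ℂ) = 1 / w ^ (k - 1) := by
        rw [← hcw, hseq]; ring
      rw [this, norm_div, norm_one, norm_pow, hwn]
    have h1 := key (r0 + ε / 2) (by positivity) (by rw [add_sub_cancel_left, abs_of_pos (by positivity)]; linarith) (by intro h; nlinarith)
    have h2 := key (r0 + ε / 3) (by positivity) (by rw [add_sub_cancel_left, abs_of_pos (by positivity)]; linarith) (by intro h; nlinarith)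
    have hm0 : k - 1 ≠ 0 := by omega
    have hlt : (r0 + ε / 3) ^ (k - 1) < (r0 + ε / 2) ^ (k - 1) := by
      apply pow_lt_pow_left₀ (by linarith) (by positivity) hm0
    have hp1 : (0:ℝ) < (r0 + ε / 3) ^ (k - 1) := by positivity
    have hp2 : (0:ℝ) < (r0 + ε / 2) ^ (k - 1) := by positivity
    rw [h1] at h2
    have := (div_lt_div_iff₀ hp2 hp1).mpr (by nlinarith : 1 * (r0 + ε/2)^(k-1) > 1 * (r0 + ε/3)^(k-1))
    · rw [h2] at this
      exact lt_irrefl _ this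
  · -- no accumulation
    intro z hz hacc
    rw [accPt_iff_nhds] at hacc
    by_cases h0 : z = 0
    · obtain ⟨y, ⟨_, hyd, hys⟩, hyz⟩ := hacc Set.univ Filter.univ_mem
      exact hys (sk_hseq hk n (by rw [h0] at hyz; exact hyz))
    · obtain ⟨y, ⟨hy0, hyd, hys⟩, hyz⟩ := hacc {(0:ℂ)}ᶜ (compl_singleton_mem_nhds h0)
      exact hys (sk_hseq hk n hy0)

end Aux3
namespace Aux4

lemma sphDist_zero_some (w : ℂ) :
    sphDist ((0 : ℂ) : OnePoint ℂ) (w : OnePoint ℂ)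
      = ‖w‖ / Real.sqrt (1 + ‖w‖ ^ 2) := by
  show ‖(0:ℂ) - w‖ / (Real.sqrt (1 + ‖(0:ℂ)‖ ^ 2) * Real.sqrt (1 + ‖w‖ ^ 2)) = _
  simp [Real.sqrt_one]

lemma sphDist_some_none (z : ℂ) :
    sphDist ((z : ℂ) : OnePoint ℂ) (OnePoint.infty : OnePoint ℂ) = 1 / Real.sqrt (1 + ‖z‖ ^ 2) := rfl

lemma sphDist_some_some (z w : ℂ) :
    sphDist ((z : ℂ) : OnePoint ℂ) (w : OnePoint ℂ)
      = ‖z - w‖ / (Real.sqrt (1 + ‖z‖ ^ 2) * Real.sqrt (1 + ‖w‖ ^ 2)) := rfl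

lemma sph_contra {z : ℂ} {w : OnePoint ℂ} (hz : 2 ≤ ‖z‖)
    (h1 : sphDist ((0 : ℂ) : OnePoint ℂ) w < 1 / 4)
    (h2 : sphDist ((z : ℂ) : OnePoint ℂ) w < 1 / 4) : False := by
  induction w using OnePoint.rec with
  | infty =>
    rw [show sphDist ((0:ℂ) : OnePoint ℂ) OnePoint.infty = 1 by
      rw [sphDist_some_none]; simp [Real.sqrt_one]] at h1
    norm_num at h1
  | coe w =>
    rw [sphDist_zero_some] at h1
    rw [sphDist_some_some] at h2
    set a := ‖w‖ with ha
    set R := ‖z‖ with hR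
    have han : 0 ≤ a := norm_nonneg w
    have s1pos : (0:ℝ) < Real.sqrt (1 + a ^ 2) := Real.sqrt_pos.mpr (by positivity)
    have s2pos : (0:ℝ) < Real.sqrt (1 + R ^ 2) := Real.sqrt_pos.mpr (by positivity)
    have hs1le : Real.sqrt (1 + a ^ 2) ≤ 1 + a := by
      rw [show (1:ℝ) + a = Real.sqrt ((1 + a) ^ 2) from (Real.sqrt_sq (by positivity)).symm]
      exact Real.sqrt_le_sqrt (by nlinarith)
    have hs2le : Real.sqrt (1 + R ^ 2) ≤ 1 + R := by
      rw [show (1:ℝ) + R = Real.sqrt ((1 + R) ^ 2) from (Real.sqrt_sq (by positivity)).symm]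
      exact Real.sqrt_le_sqrt (by nlinarith)
    rw [div_lt_iff₀ s1pos] at h1
    rw [div_lt_iff₀ (by positivity)] at h2
    have hzw : R - a ≤ ‖z - w‖ := norm_sub_norm_le z w
    have ha1 : a < 1 / 3 := by nlinarith
    have hprod : Real.sqrt (1 + R ^ 2) * Real.sqrt (1 + a ^ 2) ≤ (1 + R) * (1 + a) := by
      exact mul_le_mul hs2le hs1le (le_of_lt s1pos) (by positivity)
    nlinarith

end Aux4
namespace Aux5
open Aux Aux2 Aux4

lemma not_normal_at_zero {k : ℕ} (hk : 2 ≤ k) :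
    ∀ U ∈ 𝓝 (0 : ℂ), ¬ ∃ φ : ℕ → ℕ, StrictMono φ ∧ ∃ g : ℂ → OnePoint ℂ,
      TendstoLocUnifSph
        (fun m z => deriv (hseq k (φ m + 1)) z / hseq k (φ m + 1) z) g
        (U ∩ unitDisk) := by
  intro U hU
  rintro ⟨φ, hφ, g, hconv⟩
  have hdisk : unitDisk ∈ 𝓝 (0 : ℂ) := Metric.ball_mem_nhds 0 one_pos
  have h0 : (0 : ℂ) ∈ U ∩ unitDisk := ⟨mem_of_mem_nhds hU, mem_of_mem_nhds hdisk⟩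
  obtain ⟨t, ht, hev⟩ := hconv (1/4) (by norm_num) 0 h0
  obtain ⟨V, hVo, hV0, hVsub⟩ := mem_nhdsWithin.mp ht
  have htn : t ∈ 𝓝 (0 : ℂ) :=
    mem_of_superset (inter_mem (hVo.mem_nhds hV0) (inter_mem hU hdisk)) hVsub
  obtain ⟨r, hr, hball⟩ := Metric.mem_nhds_iff.mp htn
  rw [eventually_atTop] at hev
  obtain ⟨N, hN⟩ := hev
  set m := k - 1 with hmdef
  have hm1 : 1 ≤ m := by omega
  set δ := min r (1/2) with hδdef
  have hδ : 0 < δ := lt_min hr (by norm_num)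
  have hδr : δ ≤ r := min_le_left _ _
  have hδhalf : δ ≤ 1/2 := min_le_right _ _
  set m' := max (N + 1) (⌈(1/δ)^m⌉₊ + 1) with hm'def
  have hNm' : N < m' := lt_of_lt_of_le (Nat.lt_succ_self N) (le_max_left _ _)
  have hφlt : φ N < φ m' := hφ hNm'
  have hn'pos : (0:ℝ) < (φ m' + 1 : ℕ) := by positivity
  have hceil : ((1:ℝ)/δ)^m < ((φ m' + 1 : ℕ) : ℝ) := by
    have h1 : (⌈(1/δ)^m⌉₊ + 1 : ℕ) ≤ m' := le_max_right _ _
    have h2 : m' ≤ φ m' := hφ.le_apply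
    have h3 : ((⌈(1/δ)^m⌉₊ : ℕ) : ℝ) < ((φ m' + 1 : ℕ) : ℝ) := by
      exact_mod_cast (by omega : ⌈(1/δ)^m⌉₊ < φ m' + 1)
    calc ((1:ℝ)/δ)^m ≤ ((⌈(1/δ)^m⌉₊ : ℕ) : ℝ) := Nat.le_ceil _
      _ < _ := h3
  set ρ := (((φ m' + 1 : ℕ) : ℝ)) ^ (-(1/(m:ℝ))) with hρdef
  have hρpos : 0 < ρ := Real.rpow_pos_of_pos hn'pos _
  have hρm : ρ ^ m = (((φ m' + 1 : ℕ) : ℝ))⁻¹ := by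
    rw [hρdef, ← Real.rpow_natCast ((((φ m' + 1 : ℕ) : ℝ)) ^ (-(1/(m:ℝ)))) m,
      ← Real.rpow_mul (le_of_lt hn'pos),
      show (-(1/(m:ℝ))) * (m:ℝ) = -1 by
        field_simp,
      Real.rpow_neg_one]
  have hρδ : ρ < δ := by
    have hδm : (0:ℝ) < δ ^ m := by positivity
    have h1 : ((δ:ℝ)^m)⁻¹ < ((φ m' + 1 : ℕ) : ℝ) := by
      rw [← inv_pow]
      calc (δ⁻¹)^m = (1/δ)^m := by rw [one_div]
        _ < _ := hceil
    have h2 : ρ^m < δ^m := by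
      rw [hρm, ← inv_lt_comm₀ hδm hn'pos]
      exact h1
    exact lt_of_pow_lt_pow_left₀ m (le_of_lt hδ) h2
  have hmC : (m : ℂ) ≠ 0 := Nat.cast_ne_zero.mpr (by omega)
  set ζ := Complex.exp ((Real.pi : ℂ) * Complex.I / (m : ℂ)) with hζdef
  have hζnorm : ‖ζ‖ = 1 := by
    rw [hζdef, show ((Real.pi:ℂ) * Complex.I / (m:ℂ)) = ((Real.pi/m : ℝ):ℂ) * Complex.I by
      push_cast; ring, Complex.norm_exp_ofReal_mul_I]
  have hζm : ζ ^ m = -1 := by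
    rw [hζdef, ← Complex.exp_nat_mul,
      show ((m:ℂ)) * ((Real.pi:ℂ) * Complex.I / (m:ℂ)) = (Real.pi:ℂ) * Complex.I by
        field_simp, Complex.exp_pi_mul_I]
  set y := (ρ : ℂ) * ζ with hydef
  have hynorm : ‖y‖ = ρ := by
    rw [hydef, norm_mul, Complex.norm_real, Real.norm_eq_abs, abs_of_pos hρpos, hζnorm, mul_one]
  have hy0 : y ≠ 0 := by
    intro h
    rw [h, norm_zero] at hynorm
    exact (ne_of_gt hρpos) hynorm.symm
  have hym : y ^ m = -(((φ m' + 1 : ℕ) : ℂ))⁻¹ := by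
    rw [hydef, mul_pow, hζm, mul_neg_one, ← Complex.ofReal_pow, hρm]
    push_cast
    ring
  have hyt : y ∈ t := hball (by rw [Metric.mem_ball, dist_zero_right, hynorm]
                                exact lt_of_lt_of_le hρδ hδr)
  have hn'C : ((φ m' + 1 : ℕ) : ℂ) ≠ 0 := Nat.cast_ne_zero.mpr (by omega)
  have hzero : hseq k (φ m' + 1) y = 0 := by
    show 1 / y ^ (k - 1) + ((φ m' + 1 : ℕ) : ℂ) = 0
    rw [← hmdef, hym, one_div, inv_neg, inv_inv]
    ring
  have hA : sphDist ((0 : ℂ) : OnePoint ℂ) (g y) < 1/4 := by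
    have h := hN m' (le_of_lt hNm') y hyt
    have e : deriv (hseq k (φ m' + 1)) y / hseq k (φ m' + 1) y = 0 := by
      rw [hzero, div_zero]
    simpa only [e] using h
  have hB : sphDist ((deriv (hseq k (φ N + 1)) y / hseq k (φ N + 1) y : ℂ) : OnePoint ℂ)
      (g y) < 1/4 := hN N le_rfl y hyt
  have hw_eq : deriv (hseq k (φ N + 1)) y / hseq k (φ N + 1) y
      = (1 - (k:ℂ)) / (y * (1 + ((φ N + 1 : ℕ) : ℂ) * y ^ (k - 1))) := hseq_ratio hk hy0
  set c : ℝ := 1 - ((φ N + 1 : ℕ) : ℝ) / ((φ m' + 1 : ℕ) : ℝ) with hcdef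
  have h1p : (1 : ℂ) + ((φ N + 1 : ℕ) : ℂ) * y ^ (k - 1) = ((c : ℝ) : ℂ) := by
    rw [← hmdef, hym, hcdef]
    push_cast
    ring
  have hcpos : 0 < c := by
    rw [hcdef]
    have h1 : ((φ N + 1 : ℕ) : ℝ) / ((φ m' + 1 : ℕ) : ℝ) < 1 := by
      rw [div_lt_one hn'pos]
      exact_mod_cast (by omega : φ N + 1 < φ m' + 1)
    linarith
  have hcle : c ≤ 1 := by
    rw [hcdef]
    have : (0:ℝ) ≤ ((φ N + 1 : ℕ) : ℝ) / ((φ m' + 1 : ℕ) : ℝ) := by positivity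
    linarith
  have hk1 : (1:ℝ) ≤ (k:ℝ) - 1 := by
    have : (2:ℝ) ≤ (k:ℝ) := by exact_mod_cast hk
    linarith
  have hwnorm : ‖deriv (hseq k (φ N + 1)) y / hseq k (φ N + 1) y‖ = ((k:ℝ) - 1) / (ρ * c) := by
    rw [hw_eq, h1p, norm_div, norm_mul, hynorm, Complex.norm_real, Real.norm_eq_abs,
      abs_of_pos hcpos,
      show (1 : ℂ) - (k:ℂ) = (((1:ℝ) - (k:ℝ) : ℝ) : ℂ) by push_cast; ring,
      Complex.norm_real, Real.norm_eq_abs, abs_of_nonpos (by linarith)]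
    ring_nf
  have hw2 : 2 ≤ ‖deriv (hseq k (φ N + 1)) y / hseq k (φ N + 1) y‖ := by
    rw [hwnorm, le_div_iff₀ (by positivity)]
    nlinarith
  exact sph_contra hw2 hA hB

end Aux5

/-- For `k ≥ 2` and `M ≥ 0` the family `M^{f'/f}_{k,M}` is not normal on `𝔻`: the
functions `h_n(z) = z^{1-k} + n` satisfy `h_n'(z) = (1-k)·z^{-k}`,
`(h_n'/h_n)(z) = (1-k)/(z·(1 + n·z^{k-1}))` and `S_k(h_n) ≡ 0`, so `h_n ∈ M_{k,M}`
for all `n ≥ 1`, while `(h_n'/h_n)_n` is not normal at `0`. -/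
theorem MFam_logDeriv_not_normal (k : ℕ) (hk : 2 ≤ k) (M : ℝ) (hM : 0 ≤ M) :
    (∀ n : ℕ, 1 ≤ n → hseq k n ∈ MFam k M) ∧
    (∀ n : ℕ, 1 ≤ n → ∀ z : ℂ, z ≠ 0 →
        deriv (hseq k n) z = (1 - (k : ℂ)) / z ^ k ∧
        deriv (hseq k n) z / hseq k n z
          = (1 - (k : ℂ)) / (z * (1 + (n : ℂ) * z ^ (k - 1)))) ∧
    (∀ U ∈ 𝓝 (0 : ℂ), ¬ ∃ φ : ℕ → ℕ, StrictMono φ ∧ ∃ g : ℂ → OnePoint ℂ,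
        TendstoLocUnifSph
          (fun m z => deriv (hseq k (φ m + 1)) z / hseq k (φ m + 1) z) g
          (U ∩ unitDisk)) ∧
    ¬ NormalOn {g | ∃ f ∈ MFam k M, g = fun z => deriv f z / f z} unitDisk := by
  have h1 : ∀ n : ℕ, 1 ≤ n → hseq k n ∈ MFam k M := fun n hn => Aux3.hseq_mem hk hM hn
  have h3 := Aux5.not_normal_at_zero (k := k) hk
  refine ⟨h1, fun n hn z hz => ⟨Aux.hseq_deriv hk hz, Aux.hseq_ratio hk hz⟩, h3, ?_⟩
  intro hnorm
  obtain ⟨φ, hφ, g, hg⟩ := hnorm (fun n z => deriv (hseq k (n+1)) z / hseq k (n+1) z)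
      (fun n => ⟨hseq k (n+1), h1 (n+1) (by omega), rfl⟩)
  apply h3 Set.univ Filter.univ_mem
  refine ⟨φ, hφ, g, ?_⟩
  rw [Set.univ_inter]
  exact hg
end
end
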